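/- arXiv:1104.3226 — 3 statements merged into one kernel-verified Lean document; each statement's English description precedes it below -/
import Mathlib

section
/- The group G = ⟨x, y | x⁸ = y⁴ = 1, xʸ = x⁻¹⟩ of order 32 has minimal degree 12, and its quotient G/⟨x⁴y²⟩ ≅ ⟨x, y | x⁸ = y⁴ = 1, y² = x⁴, xʸ = x⁻¹⟩ has minimal degree 16; hence G is exceptional. -/
/-- The minimal degree of a finite group `G`: the least `n` such that `G` embeds in `Sym(n)`. -/
noncomputable def minDeg (G : Type*) [Group G] : ℕ :=
  sInf {n | ∃ f : G →* Equiv.Perm (Fin n), Function.Injective f}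

/-- Relations for `G = ⟨x, y | x⁸ = y⁴ = 1, xʸ = x⁻¹⟩` (generators `0 ↦ x`, `1 ↦ y`). -/
def relsG : Set (FreeGroup (Fin 2)) :=
  {(FreeGroup.of 0) ^ 8, (FreeGroup.of 1) ^ 4,
   ((FreeGroup.of 1)⁻¹ * FreeGroup.of 0 * FreeGroup.of 1) * FreeGroup.of 0}

/-- Relations for `⟨x, y | x⁸ = y⁴ = 1, y² = x⁴, xʸ = x⁻¹⟩`. -/
def relsGbar : Set (FreeGroup (Fin 2)) :=
  {(FreeGroup.of 0) ^ 8, (FreeGroup.of 1) ^ 4,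
   (FreeGroup.of 1) ^ 2 * ((FreeGroup.of 0) ^ 4)⁻¹,
   ((FreeGroup.of 1)⁻¹ * FreeGroup.of 0 * FreeGroup.of 1) * FreeGroup.of 0}



/-! Model of order 32: `⟨x,y | x⁸=y⁴=1, xʸ=x⁻¹⟩` as twisted product ZMod 8 × ZMod 4. -/

def M32 : Type := ZMod 8 × ZMod 4

namespace M32
instance : DecidableEq M32 := inferInstanceAs (DecidableEq (ZMod 8 × ZMod 4))
instance : Fintype M32 := inferInstanceAs (Fintype (ZMod 8 × ZMod 4))
def mk (a : ZMod 8) (b : ZMod 4) : M32 := (a, b)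
def tw (b : ZMod 4) (c : ZMod 8) : ZMod 8 := if b.val % 2 = 0 then c else -c

theorem tw_add (b : ZMod 4) (c c' : ZMod 8) : tw b (c + c') = tw b c + tw b c' := by
  unfold tw; split <;> ring

theorem tw_tw (b d : ZMod 4) (e : ZMod 8) : tw (b + d) e = tw b (tw d e) := by
  unfold tw
  have h : (b + d).val % 2 = (b.val + d.val) % 2 := by
    rw [ZMod.val_add]; exact Nat.mod_mod_of_dvd _ (by norm_num)
  split_ifs <;> first | rfl | (exfalso; omega) | rw [neg_neg]

theorem tw_zero (c : ZMod 8) : tw 0 c = c := rfl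
theorem tw_neg_fst (b : ZMod 4) (c : ZMod 8) : tw (-b) c = tw b c := by
  unfold tw
  have h : (-b).val % 2 = b.val % 2 := by revert b; decide
  rw [h]
theorem tw_neg_snd (b : ZMod 4) (c : ZMod 8) : tw b (-c) = - tw b c := by
  unfold tw; split <;> simp

instance : One M32 := ⟨mk 0 0⟩
instance : Mul M32 := ⟨fun g h => mk (g.1 + tw g.2 h.1) (g.2 + h.2)⟩
instance : Inv M32 := ⟨fun g => mk (tw g.2 (-g.1)) (-g.2)⟩

theorem mul_def (a c : ZMod 8) (b d : ZMod 4) : mk a b * mk c d = mk (a + tw b c) (b + d) := rfl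
theorem one_def : (1 : M32) = mk 0 0 := rfl
theorem inv_def (a : ZMod 8) (b : ZMod 4) : (mk a b)⁻¹ = mk (tw b (-a)) (-b) := rfl

instance : Group M32 :=
  Group.ofLeftAxioms
    (fun g h k => by
      obtain ⟨a, b⟩ := g; obtain ⟨c, d⟩ := h; obtain ⟨e, f⟩ := k
      show mk a b * mk c d * mk e f = mk a b * (mk c d * mk e f)
      rw [mul_def, mul_def, mul_def, mul_def, tw_add, tw_tw]
      exact congrArg₂ mk (by ring) (by ring))
    (fun g => by
      obtain ⟨a, b⟩ := g
      show (1 : M32) * mk a b = mk a b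
      rw [one_def, mul_def, tw_zero]
      exact congrArg₂ mk (by ring) (by ring))
    (fun g => by
      obtain ⟨a, b⟩ := g
      show (mk a b)⁻¹ * mk a b = 1
      rw [inv_def, mul_def, tw_neg_fst, tw_neg_snd, one_def]
      exact congrArg₂ mk (by ring) (by ring))

end M32


/-! Model of order 16 (generalized quaternion Q16):
`⟨x,y | x⁸=1, y²=x⁴, xʸ=x⁻¹⟩` as cocycle-twisted product ZMod 8 × ZMod 2. -/

def M16 : Type := ZMod 8 × ZMod 2

namespace M16
instance : DecidableEq M16 := inferInstanceAs (DecidableEq (ZMod 8 × ZMod 2))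
instance : Fintype M16 := inferInstanceAs (Fintype (ZMod 8 × ZMod 2))
def mk (a : ZMod 8) (b : ZMod 2) : M16 := (a, b)
def tw (b : ZMod 2) (c : ZMod 8) : ZMod 8 := if b.val % 2 = 0 then c else -c
def v (b d : ZMod 2) : ZMod 8 := if b.val % 2 = 1 ∧ d.val % 2 = 1 then 4 else 0

theorem tw_add (b : ZMod 2) (c c' : ZMod 8) : tw b (c + c') = tw b c + tw b c' := by
  unfold tw; split <;> ring

theorem tw_tw (b d : ZMod 2) (e : ZMod 8) : tw (b + d) e = tw b (tw d e) := by
  unfold tw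
  have h : (b + d).val % 2 = (b.val + d.val) % 2 := by
    rw [ZMod.val_add]; exact Nat.mod_mod_of_dvd _ (by norm_num)
  split_ifs <;> first | rfl | (exfalso; omega) | rw [neg_neg]

theorem tw_zero (c : ZMod 8) : tw 0 c = c := rfl
theorem tw_neg_fst (b : ZMod 2) (c : ZMod 8) : tw (-b) c = tw b c := by
  unfold tw
  have h : (-b).val % 2 = b.val % 2 := by revert b; decide
  rw [h]
theorem tw_neg_snd (b : ZMod 2) (c : ZMod 8) : tw b (-c) = - tw b c := by
  unfold tw; split <;> simp

theorem tw_v (b d f : ZMod 2) : tw b (v d f) = v d f := by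
  unfold tw v
  split_ifs <;> first | rfl | (revert b; decide) | decide

theorem cocycle (b d f : ZMod 2) : v b d + v (b + d) f = v d f + v b (d + f) := by
  revert b d f; decide

instance : One M16 := ⟨mk 0 0⟩
instance : Mul M16 := ⟨fun g h => mk (g.1 + tw g.2 h.1 + v g.2 h.2) (g.2 + h.2)⟩
instance : Inv M16 := ⟨fun g => mk (-(tw g.2 g.1) - v g.2 g.2) (-g.2)⟩

theorem mul_def (a c : ZMod 8) (b d : ZMod 2) :
    mk a b * mk c d = mk (a + tw b c + v b d) (b + d) := rfl
theorem one_def : (1 : M16) = mk 0 0 := rfl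
theorem inv_def (a : ZMod 8) (b : ZMod 2) : (mk a b)⁻¹ = mk (-(tw b a) - v b b) (-b) := rfl

theorem v_neg_fst (b d : ZMod 2) : v (-b) d = v b d := by revert b d; decide

instance : Group M16 :=
  Group.ofLeftAxioms
    (fun g h k => by
      obtain ⟨a, b⟩ := g; obtain ⟨c, d⟩ := h; obtain ⟨e, f⟩ := k
      show mk a b * mk c d * mk e f = mk a b * (mk c d * mk e f)
      rw [mul_def, mul_def, mul_def, mul_def, tw_add, tw_add, tw_tw, tw_v]
      refine congrArg₂ mk ?_ (by ring)
      have hc := cocycle b d f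
      -- goal : a + tw b c + v b d + (tw b (tw d e)) + v (b+d) f
      --      = a + (tw b c + tw b (tw d e) + v d f) + v b (d+f)
      linear_combination hc)
    (fun g => by
      obtain ⟨a, b⟩ := g
      show (1 : M16) * mk a b = mk a b
      rw [one_def, mul_def, tw_zero]
      refine congrArg₂ mk ?_ (by ring)
      show 0 + a + v 0 b = a
      unfold v; norm_num)
    (fun g => by
      obtain ⟨a, b⟩ := g
      show (mk a b)⁻¹ * mk a b = 1
      rw [inv_def, mul_def, tw_neg_fst, one_def]
      refine congrArg₂ mk ?_ (by ring)
      rw [v_neg_fst]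
      ring)

end M16


section Generic
variable {G : Type*} [Group G] {x y : G}

/-- zpow reduces mod n when `t ^ n = 1`. -/
theorem zpow_eq_pow_val {t : G} {n : ℕ} [NeZero n] (h : t ^ n = 1) (i : ℤ) :
    t ^ i = t ^ ((i : ZMod n)).val := by
  have h0 : (((((i : ZMod n)).val : ℤ) - i : ℤ) : ZMod n) = 0 := by
    push_cast [ZMod.natCast_val, ZMod.cast_id]
    ring
  obtain ⟨m, hm⟩ := (ZMod.intCast_zmod_eq_zero_iff_dvd _ n).1 h0
  have h1 : ((((i : ZMod n)).val : ℤ)) = i + n * m := by linarith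
  symm
  calc t ^ ((i : ZMod n)).val = t ^ ((((i : ZMod n)).val : ℤ)) := (zpow_natCast _ _).symm
    _ = t ^ (i + (n : ℤ) * m) := by rw [h1]
    _ = t ^ i := by
        rw [zpow_add, zpow_mul, zpow_natCast, h, one_zpow, mul_one]

theorem conj_inv_of (hc : y⁻¹ * x * y = x⁻¹) : y * x * y⁻¹ = x⁻¹ := by
  have h1 : y * (y⁻¹ * x * y) * y⁻¹ = y * x⁻¹ * y⁻¹ := by rw [hc]
  have h2 : y * (y⁻¹ * x * y) * y⁻¹ = x := by group
  rw [h2] at h1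
  have h3 := congrArg Inv.inv h1
  rw [h3]
  group

theorem swap_zpow (hc : y⁻¹ * x * y = x⁻¹) :
    ∀ j k : ℤ, ∃ k' : ℤ, y ^ j * x ^ k = x ^ k' * y ^ j := by
  have hc2 : ∀ k : ℤ, y * x ^ k * y⁻¹ = x ^ (-k) := fun k => by
    rw [← conj_zpow (a := y) (b := x), conj_inv_of hc, zpow_neg, inv_zpow]
  have hc3 : ∀ k : ℤ, y⁻¹ * x ^ k * y = x ^ (-k) := fun k => by
    have h4 : y⁻¹ * x ^ k * y = y⁻¹ * x ^ k * y⁻¹⁻¹ := by group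
    have h5 : y⁻¹ * x * y⁻¹⁻¹ = x⁻¹ := by rw [inv_inv]; exact hc
    rw [h4, ← conj_zpow (a := y⁻¹) (b := x), h5, zpow_neg, inv_zpow]
  intro j
  induction j using Int.induction_on with
  | zero => exact fun k => ⟨k, by simp⟩
  | succ j ih =>
    intro k
    obtain ⟨k', hk⟩ := ih (-k)
    refine ⟨k', ?_⟩
    have e1 : y ^ ((j : ℤ) + 1) * x ^ k = y ^ (j : ℤ) * (y * x ^ k * y⁻¹) * y := by group
    rw [e1, hc2, hk]
    group
  | pred j ih =>
    intro k
    obtain ⟨k', hk⟩ := ih (-k)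
    refine ⟨k', ?_⟩
    have e1 : y ^ (-(j : ℤ) - 1) * x ^ k = y ^ (-(j : ℤ)) * (y⁻¹ * x ^ k * y) * y⁻¹ := by group
    rw [e1, hc3, hk]
    group

/-- The subgroup of words `x^i y^j` is everything, in presence of the commutation rule. -/
def xySubgroup (x y : G) (hc : y⁻¹ * x * y = x⁻¹) : Subgroup G where
  carrier := {g | ∃ i j : ℤ, g = x ^ i * y ^ j}
  one_mem' := ⟨0, 0, by simp⟩
  mul_mem' := by
    rintro g h ⟨i, j, rfl⟩ ⟨k, l, rfl⟩
    obtain ⟨k', hk⟩ := swap_zpow hc j k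
    refine ⟨i + k', j + l, ?_⟩
    have h2 : x ^ (i + k') * y ^ (j + l) = x ^ i * (x ^ k' * y ^ j) * y ^ l := by
      rw [zpow_add, zpow_add]; group
    rw [h2, ← hk]; group
  inv_mem' := by
    rintro g ⟨i, j, rfl⟩
    obtain ⟨k', hk⟩ := swap_zpow hc (-j) (-i)
    refine ⟨k', -j, ?_⟩
    rw [← hk]; group

end Generic

/-! ### The presented group `G` -/

namespace GrpG
open PresentedGroup

abbrev G := PresentedGroup relsG

def x : G := PresentedGroup.of 0
def y : G := PresentedGroup.of 1

theorem mk_rel {α : Type*} {rels : Set (FreeGroup α)} {r : FreeGroup α} (h : r ∈ rels) :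
    PresentedGroup.mk rels r = 1 :=
  (QuotientGroup.eq_one_iff r).2 (Subgroup.subset_normalClosure h)

theorem hx8 : x ^ 8 = 1 := by
  have h := mk_rel (rels := relsG) (r := (FreeGroup.of 0) ^ 8) (Or.inl rfl)
  rwa [map_pow] at h

theorem hy4 : y ^ 4 = 1 := by
  have h := mk_rel (rels := relsG) (r := (FreeGroup.of 1) ^ 4) (Or.inr (Or.inl rfl))
  rwa [map_pow] at h

theorem hconj : y⁻¹ * x * y = x⁻¹ := by
  have h := mk_rel (rels := relsG)
    (r := ((FreeGroup.of 1)⁻¹ * FreeGroup.of 0 * FreeGroup.of 1) * FreeGroup.of 0)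
    (Or.inr (Or.inr rfl))
  rw [map_mul, map_mul, map_mul, map_inv] at h
  have : (y⁻¹ * x * y) * x = 1 := h
  rw [mul_eq_one_iff_eq_inv] at this
  exact this

theorem spanning (g : G) : ∃ i j : ℤ, g = x ^ i * y ^ j :=
  PresentedGroup.generated_by relsG (xySubgroup x y hconj)
    (fun j => by
      fin_cases j
      · exact ⟨1, 0, by simp [x]⟩
      · exact ⟨0, 1, by simp [y]⟩) g

end GrpG


namespace M32
theorem tw_zero' (b : ZMod 4) : tw b 0 = 0 := by unfold tw; split <;> simp
theorem pow_x (n : ℕ) : (mk 1 0) ^ n = mk (n : ZMod 8) 0 := by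
  induction n with
  | zero => rw [pow_zero, one_def]; norm_num
  | succ k ih =>
    rw [pow_succ, ih, mul_def, tw_zero]
    exact congrArg₂ mk (by push_cast; ring) (by ring)
theorem pow_y (n : ℕ) : (mk 0 1) ^ n = mk 0 (n : ZMod 4) := by
  induction n with
  | zero => rw [pow_zero, one_def]; norm_num
  | succ k ih =>
    rw [pow_succ, ih, mul_def]
    refine congrArg₂ mk ?_ (by push_cast; ring)
    rw [tw_zero']
    ring
end M32

namespace GrpG

def fG : Fin 2 → M32 := ![M32.mk 1 0, M32.mk 0 1]

theorem fG_rels : ∀ r ∈ relsG, FreeGroup.lift fG r = 1 := by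
  intro r hr
  rcases hr with h | h | h <;> subst h <;>
    simp only [map_pow, map_mul, map_inv, FreeGroup.lift_apply_of] <;> decide

def φ : G →* M32 := PresentedGroup.toGroup fG_rels

theorem φ_x : φ x = M32.mk 1 0 := PresentedGroup.toGroup.of fG_rels
theorem φ_y : φ y = M32.mk 0 1 := PresentedGroup.toGroup.of fG_rels

def emb (p : M32) : G := x ^ (p.1.val) * y ^ (p.2.val)

theorem φ_emb (p : M32) : φ (emb p) = p := by
  obtain ⟨a, b⟩ := p
  show φ (x ^ a.val * y ^ b.val) = M32.mk a b
  rw [map_mul, map_pow, map_pow, φ_x, φ_y, M32.pow_x, M32.pow_y, M32.mul_def, M32.tw_zero]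
  rw [ZMod.natCast_val, ZMod.cast_id, ZMod.natCast_val, ZMod.cast_id]
  exact congrArg₂ M32.mk (by ring) (by ring)

theorem emb_surj : Function.Surjective emb := by
  intro g
  obtain ⟨i, j, rfl⟩ := spanning g
  refine ⟨((i : ZMod 8), (j : ZMod 4)), ?_⟩
  show x ^ ((i : ZMod 8)).val * y ^ ((j : ZMod 4)).val = x ^ i * y ^ j
  rw [zpow_eq_pow_val hx8 i, zpow_eq_pow_val hy4 j]

theorem φ_bij : Function.Bijective φ := by
  constructor
  · intro g g' h
    obtain ⟨p, rfl⟩ := emb_surj g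
    obtain ⟨p', rfl⟩ := emb_surj g'
    rw [φ_emb, φ_emb] at h
    rw [h]
  · intro m
    exact ⟨emb m, φ_emb m⟩

noncomputable def e32 : G ≃* M32 := MulEquiv.ofBijective φ φ_bij

theorem cardM32 : Nat.card M32 = 32 := by
  rw [Nat.card_eq_fintype_card]; rfl

theorem cardG : Nat.card G = 32 := by
  rw [Nat.card_congr e32.toEquiv, cardM32]

end GrpG


namespace M16
theorem tw_zero' (b : ZMod 2) : tw b 0 = 0 := by unfold tw; split <;> simp
theorem v_zero_left (d : ZMod 2) : v 0 d = 0 := by revert d; decide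
theorem pow_x (n : ℕ) : (mk 1 0) ^ n = mk (n : ZMod 8) 0 := by
  induction n with
  | zero => rw [pow_zero, one_def]; norm_num
  | succ k ih =>
    rw [pow_succ, ih, mul_def, tw_zero]
    refine congrArg₂ mk ?_ (by ring)
    show (k : ZMod 8) + 1 + v 0 0 = ((k + 1 : ℕ) : ZMod 8)
    rw [v_zero_left]; push_cast; ring
end M16

namespace GrpGbar
open PresentedGroup

abbrev Gb := PresentedGroup relsGbar

def x : Gb := PresentedGroup.of 0
def y : Gb := PresentedGroup.of 1

theorem hx8 : x ^ 8 = 1 := by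
  have h := GrpG.mk_rel (rels := relsGbar) (r := (FreeGroup.of 0) ^ 8) (Or.inl rfl)
  rwa [map_pow] at h

theorem hy4 : y ^ 4 = 1 := by
  have h := GrpG.mk_rel (rels := relsGbar) (r := (FreeGroup.of 1) ^ 4) (Or.inr (Or.inl rfl))
  rwa [map_pow] at h

theorem hy2x4 : y ^ 2 = x ^ 4 := by
  have h := GrpG.mk_rel (rels := relsGbar)
    (r := (FreeGroup.of 1) ^ 2 * ((FreeGroup.of 0) ^ 4)⁻¹) (Or.inr (Or.inr (Or.inl rfl)))
  rw [map_mul, map_inv, map_pow, map_pow] at h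
  rw [mul_inv_eq_one] at h
  exact h

theorem hconj : y⁻¹ * x * y = x⁻¹ := by
  have h := GrpG.mk_rel (rels := relsGbar)
    (r := ((FreeGroup.of 1)⁻¹ * FreeGroup.of 0 * FreeGroup.of 1) * FreeGroup.of 0)
    (Or.inr (Or.inr (Or.inr rfl)))
  rw [map_mul, map_mul, map_mul, map_inv] at h
  have h2 : (y⁻¹ * x * y) * x = 1 := h
  rw [mul_eq_one_iff_eq_inv] at h2
  exact h2

theorem spanning (g : Gb) : ∃ i j : ℤ, g = x ^ i * y ^ j :=
  PresentedGroup.generated_by relsGbar (xySubgroup x y hconj)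
    (fun j => by
      fin_cases j
      · exact ⟨1, 0, by simp [x]⟩
      · exact ⟨0, 1, by simp [y]⟩) g

def fGb : Fin 2 → M16 := ![M16.mk 1 0, M16.mk 0 1]

theorem fGb_rels : ∀ r ∈ relsGbar, FreeGroup.lift fGb r = 1 := by
  intro r hr
  rcases hr with h | h | h | h <;> subst h <;>
    simp only [map_pow, map_mul, map_inv, FreeGroup.lift_apply_of] <;> decide

def φ : Gb →* M16 := PresentedGroup.toGroup fGb_rels

theorem φ_x : φ x = M16.mk 1 0 := PresentedGroup.toGroup.of fGb_rels
theorem φ_y : φ y = M16.mk 0 1 := PresentedGroup.toGroup.of fGb_rels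

def emb (p : M16) : Gb := x ^ (p.1.val) * y ^ (p.2.val)

theorem zmod2_cases (b : ZMod 2) : b = 0 ∨ b = 1 := by revert b; decide

theorem φ_emb (p : M16) : φ (emb p) = p := by
  obtain ⟨a, b⟩ := p
  show φ (x ^ a.val * y ^ b.val) = M16.mk a b
  rw [map_mul, map_pow, map_pow, φ_x, φ_y, M16.pow_x]
  rw [ZMod.natCast_val, ZMod.cast_id]
  rcases zmod2_cases b with rfl | rfl
  · show M16.mk a 0 * (M16.mk 0 1) ^ (0 : ZMod 2).val = M16.mk a 0
    rw [show (0 : ZMod 2).val = 0 from rfl, pow_zero, mul_one]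
  · show M16.mk a 0 * (M16.mk 0 1) ^ (1 : ZMod 2).val = M16.mk a 1
    rw [show (1 : ZMod 2).val = 1 from rfl, pow_one, M16.mul_def, M16.tw_zero']
    refine congrArg₂ M16.mk ?_ (by ring)
    show a + 0 + M16.v 0 1 = a
    rw [M16.v_zero_left]; ring

theorem emb_surj : Function.Surjective emb := by
  intro g
  obtain ⟨i, j, rfl⟩ := spanning g
  have hj : y ^ j = x ^ (4 * (j / 2)) * y ^ (j % 2) := by
    have : j = 2 * (j / 2) + j % 2 := (Int.mul_ediv_add_emod j 2).symm
    calc y ^ j = y ^ (2 * (j / 2) + j % 2) := by rw [← this]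
      _ = (y ^ (2 : ℤ)) ^ (j / 2) * y ^ (j % 2) := by rw [zpow_add, zpow_mul]
      _ = (x ^ (4 : ℤ)) ^ (j / 2) * y ^ (j % 2) := by
          norm_num [zpow_ofNat]
          rw [hy2x4]
      _ = x ^ (4 * (j / 2)) * y ^ (j % 2) := by rw [← zpow_mul]
  have hg : x ^ i * y ^ j = x ^ (i + 4 * (j / 2)) * y ^ (j % 2) := by
    rw [hj, zpow_add, mul_assoc]
  rw [hg]
  refine ⟨(((i + 4 * (j / 2) : ℤ) : ZMod 8), (j : ZMod 2)), ?_⟩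
  show x ^ (((i + 4 * (j / 2) : ℤ) : ZMod 8)).val * y ^ ((j : ZMod 2)).val = _
  rw [zpow_eq_pow_val hx8 (i + 4 * (j / 2))]
  congr 1
  rcases Int.emod_two_eq j with h | h
  · have h2 : (j : ZMod 2) = 0 := by
      rw [ZMod.intCast_zmod_eq_zero_iff_dvd]
      exact Int.dvd_of_emod_eq_zero h
    rw [h, h2]
    rfl
  · have h2 : (j : ZMod 2) = 1 := by
      have : ((j - 1 : ℤ) : ZMod 2) = 0 := by
        rw [ZMod.intCast_zmod_eq_zero_iff_dvd]
        omega
      push_cast at this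
      linear_combination this
    rw [h, h2]
    rfl

theorem φ_bij : Function.Bijective φ := by
  constructor
  · intro g g' h
    obtain ⟨p, rfl⟩ := emb_surj g
    obtain ⟨p', rfl⟩ := emb_surj g'
    rw [φ_emb, φ_emb] at h
    rw [h]
  · intro m
    exact ⟨emb m, φ_emb m⟩

noncomputable def e16 : Gb ≃* M16 := MulEquiv.ofBijective φ φ_bij

theorem cardM16 : Nat.card M16 = 16 := by
  rw [Nat.card_eq_fintype_card]; rfl

end GrpGbar


/-! ### Extra generic fact: `y²` commutes with powers of `x` -/

section Generic2
variable {G : Type*} [Group G] {x y : G}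

theorem conj_zpow_left (hc : y⁻¹ * x * y = x⁻¹) (k : ℤ) : y * x ^ k * y⁻¹ = x ^ (-k) := by
  rw [← conj_zpow (a := y) (b := x), conj_inv_of hc, zpow_neg, inv_zpow]

theorem central_sq (hc : y⁻¹ * x * y = x⁻¹) (k : ℤ) : (y * y) * x ^ k = x ^ k * (y * y) := by
  calc (y * y) * x ^ k = y * (y * x ^ k * y⁻¹) * y := by group
    _ = y * x ^ (-k) * y := by rw [conj_zpow_left hc]
    _ = (y * x ^ (-k) * y⁻¹) * (y * y) := by group
    _ = x ^ (-(-k)) * (y * y) := by rw [conj_zpow_left hc]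
    _ = x ^ k * (y * y) := by rw [neg_neg]

theorem central_sq' (hc : y⁻¹ * x * y = x⁻¹) : y ^ 2 * x ^ 4 = x ^ 4 * y ^ 2 := by
  have h := central_sq hc (4 : ℤ)
  rw [show ((4:ℤ)) = ((4:ℕ):ℤ) by norm_num, zpow_natCast, ← pow_two] at h
  exact h

end Generic2

/-! ### The quotient isomorphism -/

namespace QuotIso
open PresentedGroup GrpG GrpGbar

def N : Subgroup GrpG.G := Subgroup.normalClosure {GrpG.x ^ 4 * GrpG.y ^ 2}

instance : N.Normal := Subgroup.normalClosure_normal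

/-- the element `y^2 * (x^4)⁻¹` equals `x^4 * y^2` in `G`. -/
theorem keyG : (GrpG.y : G) ^ 2 * ((GrpG.x : G) ^ 4)⁻¹ = GrpG.x ^ 4 * GrpG.y ^ 2 := by
  have hinv : ((GrpG.x : G) ^ 4)⁻¹ = GrpG.x ^ 4 := by
    refine inv_eq_of_mul_eq_one_right ?_
    rw [← pow_add]
    exact GrpG.hx8
  rw [hinv]
  exact central_sq' GrpG.hconj

def fα : Fin 2 → Gb := fun i => PresentedGroup.of i

theorem fα_rels : ∀ r ∈ relsG, FreeGroup.lift fα r = 1 := by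
  intro r hr
  rcases hr with h | h | h <;> subst h
  · rw [map_pow]; exact GrpGbar.hx8
  · rw [map_pow]; exact GrpGbar.hy4
  · rw [map_mul, map_mul, map_mul, map_inv]
    show (GrpGbar.y⁻¹ * GrpGbar.x * GrpGbar.y) * GrpGbar.x = 1
    rw [GrpGbar.hconj, inv_mul_cancel]

def α : G →* Gb := PresentedGroup.toGroup fα_rels

theorem α_x : α GrpG.x = GrpGbar.x := PresentedGroup.toGroup.of fα_rels
theorem α_y : α GrpG.y = GrpGbar.y := PresentedGroup.toGroup.of fα_rels

theorem N_le_ker : N ≤ α.ker := by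
  refine Subgroup.normalClosure_le_normal ?_
  intro s hs
  rcases hs with rfl
  rw [SetLike.mem_coe, MonoidHom.mem_ker, map_mul, map_pow, map_pow, α_x, α_y,
    ← GrpGbar.hy2x4, ← pow_add]
  exact GrpGbar.hy4

def α' : G ⧸ N →* Gb :=
  QuotientGroup.lift N α (fun g hg => MonoidHom.mem_ker.mp (N_le_ker hg))

def fβ : Fin 2 → G ⧸ N := fun i => QuotientGroup.mk' N (PresentedGroup.of i)

theorem fβ_rels : ∀ r ∈ relsGbar, FreeGroup.lift fβ r = 1 := by
  intro r hr
  rcases hr with h | h | h | h <;> subst h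
  · rw [map_pow]
    show (QuotientGroup.mk' N GrpG.x) ^ 8 = 1
    rw [← map_pow, GrpG.hx8, map_one]
  · rw [map_pow]
    show (QuotientGroup.mk' N GrpG.y) ^ 4 = 1
    rw [← map_pow, GrpG.hy4, map_one]
  · rw [map_mul, map_inv, map_pow, map_pow]
    show (QuotientGroup.mk' N GrpG.y) ^ 2 * ((QuotientGroup.mk' N GrpG.x) ^ 4)⁻¹ = 1
    rw [← map_pow, ← map_pow, ← map_inv, ← map_mul, keyG]
    rw [QuotientGroup.mk'_apply, QuotientGroup.eq_one_iff]
    exact Subgroup.subset_normalClosure rfl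
  · rw [map_mul, map_mul, map_mul, map_inv]
    show ((QuotientGroup.mk' N GrpG.y)⁻¹ * QuotientGroup.mk' N GrpG.x * QuotientGroup.mk' N GrpG.y)
        * QuotientGroup.mk' N GrpG.x = 1
    rw [← map_inv, ← map_mul, ← map_mul, ← map_mul]
    rw [show GrpG.y⁻¹ * GrpG.x * GrpG.y * GrpG.x = 1 by rw [GrpG.hconj, inv_mul_cancel]]
    exact map_one _

def β : Gb →* G ⧸ N := PresentedGroup.toGroup fβ_rels

theorem γ1 : α'.comp β = MonoidHom.id Gb := by
  refine PresentedGroup.ext fun i => ?_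
  show α' (β (PresentedGroup.of i)) = PresentedGroup.of i
  rw [show β (PresentedGroup.of i) = fβ i from PresentedGroup.toGroup.of fβ_rels]
  show α (PresentedGroup.of i) = PresentedGroup.of i
  exact PresentedGroup.toGroup.of fα_rels

theorem γ2 : β.comp α' = MonoidHom.id (G ⧸ N) := by
  refine QuotientGroup.monoidHom_ext N (PresentedGroup.ext fun i => ?_)
  show β (α' ((QuotientGroup.mk' N) (PresentedGroup.of i))) = (QuotientGroup.mk' N) (PresentedGroup.of i)
  rw [show α' ((QuotientGroup.mk' N) (PresentedGroup.of i)) = α (PresentedGroup.of i) from rfl]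
  rw [show α (PresentedGroup.of i) = fα i from PresentedGroup.toGroup.of fα_rels]
  exact PresentedGroup.toGroup.of fβ_rels

noncomputable def quotIso : (G ⧸ N) ≃* Gb := MonoidHom.toMulEquiv α' β γ2 γ1

end QuotIso


/-! ### Minimal degree -/

theorem minDeg_congr {G H : Type*} [Group G] [Group H] (e : G ≃* H) :
    minDeg G = minDeg H := by
  unfold minDeg
  congr 1
  ext n
  constructor
  · rintro ⟨f, hf⟩
    exact ⟨f.comp e.symm.toMonoidHom, hf.comp e.symm.injective⟩
  · rintro ⟨f, hf⟩
    exact ⟨f.comp e.toMonoidHom, hf.comp e.injective⟩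

/-- mul-equiv version of `Equiv.permCongr`. -/
def permCongrHom {α β : Type*} (e : α ≃ β) : Equiv.Perm α ≃* Equiv.Perm β where
  toEquiv := e.permCongr
  map_mul' p q := by
    ext b
    simp [Equiv.permCongr_apply, Equiv.Perm.mul_apply]

namespace UpperG
open GrpG

def πx : Equiv.Perm (Fin 12) :=
  ⟨![1,2,3,4,5,6,7,0,8,9,10,11], ![7,0,1,2,3,4,5,6,8,9,10,11], by decide, by decide⟩
def πy : Equiv.Perm (Fin 12) :=
  ⟨![0,7,6,5,4,3,2,1,9,10,11,8], ![0,7,6,5,4,3,2,1,11,8,9,10], by decide, by decide⟩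

def fP : Fin 2 → Equiv.Perm (Fin 12) := ![πx, πy]

theorem fP_rels : ∀ r ∈ relsG, FreeGroup.lift fP r = 1 := by
  intro r hr
  rcases hr with h | h | h <;> subst h <;>
    simp only [map_pow, map_mul, map_inv, FreeGroup.lift_apply_of] <;> decide

def hG : G →* Equiv.Perm (Fin 12) := PresentedGroup.toGroup fP_rels

theorem hG_key : ∀ p : M32, hG (emb p) = πx ^ (p.1.val) * πy ^ (p.2.val) := by
  intro p
  show hG (x ^ p.1.val * y ^ p.2.val) = _
  rw [map_mul, map_pow, map_pow]
  rw [show hG x = πx from PresentedGroup.toGroup.of fP_rels,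
    show hG y = πy from PresentedGroup.toGroup.of fP_rels]

theorem hG_inj : Function.Injective hG := by
  rw [injective_iff_map_eq_one]
  intro g hg
  obtain ⟨p, rfl⟩ := emb_surj g
  rw [hG_key] at hg
  have hp : p = ((0 : ZMod 8), (0 : ZMod 4)) := by
    revert hg
    revert p
    unfold M32; decide
  subst hp
  show x ^ (0 : ZMod 8).val * y ^ (0 : ZMod 4).val = 1
  rw [show (0 : ZMod 8).val = 0 from rfl, show (0 : ZMod 4).val = 0 from rfl,
    pow_zero, pow_zero, mul_one]

end UpperG


/-! ### Lower bound: M32 needs at least 12 points -/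

namespace LowerM32

def a : M32 := M32.mk 4 0
def b : M32 := M32.mk 0 2
def c : M32 := M32.mk 4 2
def snd (g : M32) : ZMod 4 := g.2

theorem D2 : ∀ g : M32, g = 1 ∨ (g ^ 4 = a ∨ g ^ 2 = a ∨ g = a) ∨
    (g ^ 4 = b ∨ g ^ 2 = b ∨ g = b) ∨ (g ^ 4 = c ∨ g ^ 2 = c ∨ g = c) := by decide

theorem Dcentral_b : ∀ g : M32, b * g = g * b := by decide
theorem Dcentral_c : ∀ g : M32, c * g = g * c := by decide
theorem Dsnd : ∀ g : M32, snd g = 0 → g ≠ 1 → (g = a ∨ g ^ 2 = a ∨ g ^ 4 = a) := by decide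

def φ4 : M32 →* Multiplicative (ZMod 4) :=
  MonoidHom.mk' (fun g => Multiplicative.ofAdd (snd g)) (fun _ _ => rfl)

theorem cardM32' : Nat.card M32 = 32 := by rw [Nat.card_eq_fintype_card]; rfl

theorem F1 (H : Subgroup M32) (ha : a ∉ H) : Nat.card H ≤ 4 := by
  have hinj : Function.Injective (φ4.comp H.subtype) := by
    rw [injective_iff_map_eq_one]
    intro u hu
    have h2 : snd (↑u : M32) = 0 := by
      have := congrArg Multiplicative.toAdd hu
      exact this
    by_contra hne
    have hu1 : (↑u : M32) ≠ 1 := fun h => hne (Subtype.ext h)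
    rcases Dsnd _ h2 hu1 with h | h | h
    · exact ha (h ▸ u.2)
    · exact ha (h ▸ pow_mem u.2 2)
    · exact ha (h ▸ pow_mem u.2 4)
  calc Nat.card H ≤ Nat.card (Multiplicative (ZMod 4)) :=
        Nat.card_le_card_of_injective _ hinj
    _ = 4 := by rw [Nat.card_eq_fintype_card]; rfl

theorem F2 (H : Subgroup M32) (h8 : 8 < Nat.card H) : b ∈ H ∧ c ∈ H := by
  have hmul := Subgroup.card_mul_index H
  rw [cardM32'] at hmul
  have hle3 : H.index ≤ 3 := by
    by_contra hgt
    push_neg at hgt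
    have h94 : 9 * 4 ≤ Nat.card H * H.index := Nat.mul_le_mul (by omega) (by omega)
    omega
  have h3 : H.index ≠ 3 := fun h => by rw [h] at hmul; omega
  have hpos : H.index ≠ 0 := by
    intro h
    rw [h, Nat.mul_zero] at hmul
    omega
  have hbig : H.index = 1 ∨ H.index = 2 := by omega
  rcases hbig with h | h
  · have : H = ⊤ := Subgroup.index_eq_one.mp h
    subst this
    exact ⟨trivial, trivial⟩
  · constructor
    · rw [show b = (M32.mk 0 1) ^ 2 by decide]
      exact Subgroup.sq_mem_of_index_two h _
    · rw [show c = (M32.mk 2 0) ^ 2 * (M32.mk 0 1) ^ 2 by decide]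
      exact mul_mem (Subgroup.sq_mem_of_index_two h _) (Subgroup.sq_mem_of_index_two h _)

theorem lower32 {n : ℕ} (f : M32 →* Equiv.Perm (Fin n)) (hf : Function.Injective f) :
    12 ≤ n := by
  letI : MulAction M32 (Fin n) := MulAction.compHom _ f
  have hsmul : ∀ (g : M32) (ω : Fin n), g • ω = f g ω := fun g ω => rfl
  have horbit_card : ∀ ω : Fin n,
      Nat.card (MulAction.orbit M32 ω) = (MulAction.stabilizer M32 ω).index := fun ω =>
    (Nat.card_congr (MulAction.orbitEquivQuotientStabilizer M32 ω))
  have hfix : ∀ g : M32, g ≠ 1 → ∃ ω : Fin n, g • ω ≠ ω := by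
    intro g hg
    have hne : f g ≠ 1 := fun h => hg (hf (by rw [h, map_one]))
    by_contra hall
    push_neg at hall
    refine hne (Equiv.ext fun ω => ?_)
    have := hall ω
    rw [hsmul] at this
    exact this
  have horbsub : ∀ s : Set (Fin n), s.ncard ≤ n := fun s =>
    le_trans (Set.ncard_le_ncard (Set.subset_univ s))
      (by rw [Set.ncard_univ, Nat.card_eq_fintype_card, Fintype.card_fin])
  -- choose a point moved by `a`
  obtain ⟨ω₀, h0⟩ := hfix a (by decide)
  have ha0 : a ∉ MulAction.stabilizer M32 ω₀ := fun h => h0 h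
  have hc0 : Nat.card (MulAction.stabilizer M32 ω₀) ≤ 4 := F1 _ ha0
  have hmul0 := Subgroup.card_mul_index (MulAction.stabilizer M32 ω₀)
  rw [cardM32'] at hmul0
  have hidx0 : 8 ≤ (MulAction.stabilizer M32 ω₀).index := by
    by_contra hlt
    push_neg at hlt
    have h1 : Nat.card (MulAction.stabilizer M32 ω₀) * (MulAction.stabilizer M32 ω₀).index
        ≤ 4 * 7 := Nat.mul_le_mul hc0 (by omega)
    omega
  have horb0 : 8 ≤ (MulAction.orbit M32 ω₀).ncard := by
    rw [← Nat.card_coe_set_eq, horbit_card]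
    exact hidx0
  -- key continuation lemma, for a central element `d` in the stabilizer of `ω₀`
  have main : ∀ d : M32, d ≠ 1 → (∀ g : M32, d * g = g * d) →
      (∀ H : Subgroup M32, 8 < Nat.card H → d ∈ H) →
      d ∈ MulAction.stabilizer M32 ω₀ → 12 ≤ n := by
    intro d hd1 hdc hdbig hdstab
    obtain ⟨ω₁, h1⟩ := hfix d hd1
    have hd1' : d ∉ MulAction.stabilizer M32 ω₁ := fun h => h1 h
    have hc1 : Nat.card (MulAction.stabilizer M32 ω₁) ≤ 8 := by
      by_contra hgt
      push_neg at hgt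
      exact hd1' (hdbig _ hgt)
    have hmul1 := Subgroup.card_mul_index (MulAction.stabilizer M32 ω₁)
    rw [cardM32'] at hmul1
    have hidx1 : 4 ≤ (MulAction.stabilizer M32 ω₁).index := by
      by_contra hlt
      push_neg at hlt
      have h1' : Nat.card (MulAction.stabilizer M32 ω₁) * (MulAction.stabilizer M32 ω₁).index
          ≤ 8 * 3 := Nat.mul_le_mul hc1 (by omega)
      omega
    have horb1 : 4 ≤ (MulAction.orbit M32 ω₁).ncard := by
      rw [← Nat.card_coe_set_eq, horbit_card]
      exact hidx1
    have hnotin : ω₁ ∉ MulAction.orbit M32 ω₀ := by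
      rintro ⟨g, rfl⟩
      apply h1
      show d • g • ω₀ = g • ω₀
      rw [smul_smul, hdc g, ← smul_smul, show d • ω₀ = ω₀ from hdstab]
    have hdisj : Disjoint (MulAction.orbit M32 ω₀) (MulAction.orbit M32 ω₁) := by
      rw [Set.disjoint_left]
      intro z hz0 hz1
      apply hnotin
      rw [← MulAction.orbit_eq_iff.2 hz0, MulAction.orbit_eq_iff.2 hz1]
      exact MulAction.mem_orbit_self ω₁
    have hcup := Set.ncard_union_eq hdisj (Set.toFinite _) (Set.toFinite _)
    have := horbsub (MulAction.orbit M32 ω₀ ∪ MulAction.orbit M32 ω₁)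
    omega
  -- the stabilizer of `ω₀` is nontrivial or the orbit has 32 points
  rcases Subgroup.bot_or_exists_ne_one (MulAction.stabilizer M32 ω₀) with hbot | ⟨u, hu, hune⟩
  · have hh : (MulAction.stabilizer M32 ω₀).index = 32 := by
      rw [hbot, Subgroup.index_bot, cardM32']
    have h32 : 32 ≤ (MulAction.orbit M32 ω₀).ncard := by
      rw [← Nat.card_coe_set_eq, horbit_card, hh]
    have := horbsub (MulAction.orbit M32 ω₀)
    omega
  · have hbc : b ∈ MulAction.stabilizer M32 ω₀ ∨ c ∈ MulAction.stabilizer M32 ω₀ := by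
      rcases D2 u with h | h | h | h
      · exact absurd h hune
      · exfalso
        rcases h with h | h | h
        · exact ha0 (h ▸ pow_mem hu 4)
        · exact ha0 (h ▸ pow_mem hu 2)
        · exact ha0 (h ▸ hu)
      · left
        rcases h with h | h | h
        · exact h ▸ pow_mem hu 4
        · exact h ▸ pow_mem hu 2
        · exact h ▸ hu
      · right
        rcases h with h | h | h
        · exact h ▸ pow_mem hu 4
        · exact h ▸ pow_mem hu 2
        · exact h ▸ hu
    rcases hbc with hmem | hmem
    · exact main b (by decide) Dcentral_b (fun H h8 => (F2 H h8).1) hmem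
    · exact main c (by decide) Dcentral_c (fun H h8 => (F2 H h8).2) hmem

end LowerM32


/-! ### Q16: lower bound 16 and regular representation -/

namespace LowerM16

def z : M16 := M16.mk 4 0

theorem Dz : ∀ g : M16, g = 1 ∨ g ^ 8 = z ∨ g ^ 4 = z ∨ g ^ 2 = z ∨ g = z := by decide

theorem cardM16' : Nat.card M16 = 16 := by rw [Nat.card_eq_fintype_card]; rfl

theorem lower16 {n : ℕ} (f : M16 →* Equiv.Perm (Fin n)) (hf : Function.Injective f) :
    16 ≤ n := by
  letI : MulAction M16 (Fin n) := MulAction.compHom _ f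
  have hsmul : ∀ (g : M16) (ω : Fin n), g • ω = f g ω := fun g ω => rfl
  have horbit_card : ∀ ω : Fin n,
      Nat.card (MulAction.orbit M16 ω) = (MulAction.stabilizer M16 ω).index := fun ω =>
    (Nat.card_congr (MulAction.orbitEquivQuotientStabilizer M16 ω))
  have hfix : ∀ g : M16, g ≠ 1 → ∃ ω : Fin n, g • ω ≠ ω := by
    intro g hg
    have hne : f g ≠ 1 := fun h => hg (hf (by rw [h, map_one]))
    by_contra hall
    push_neg at hall
    refine hne (Equiv.ext fun ω => ?_)
    have := hall ω
    rw [hsmul] at this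
    exact this
  obtain ⟨ω₀, h0⟩ := hfix z (by decide)
  have hz0 : z ∉ MulAction.stabilizer M16 ω₀ := fun h => h0 h
  have hbot : MulAction.stabilizer M16 ω₀ = ⊥ := by
    rcases Subgroup.bot_or_exists_ne_one (MulAction.stabilizer M16 ω₀) with hbot | ⟨u, hu, hune⟩
    · exact hbot
    · exfalso
      rcases Dz u with h | h | h | h | h
      · exact hune h
      · exact hz0 (h ▸ pow_mem hu 8)
      · exact hz0 (h ▸ pow_mem hu 4)
      · exact hz0 (h ▸ pow_mem hu 2)
      · exact hz0 (h ▸ hu)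
  have hidx : (MulAction.stabilizer M16 ω₀).index = 16 := by
    rw [hbot, Subgroup.index_bot, cardM16']
  have horb : 16 ≤ (MulAction.orbit M16 ω₀).ncard := by
    rw [← Nat.card_coe_set_eq, horbit_card, hidx]
  calc 16 ≤ (MulAction.orbit M16 ω₀).ncard := horb
    _ ≤ n := le_trans (Set.ncard_le_ncard (Set.subset_univ _))
      (by rw [Set.ncard_univ, Nat.card_eq_fintype_card, Fintype.card_fin])

noncomputable def regRep : M16 →* Equiv.Perm (Fin 16) :=
  (permCongrHom (Fintype.equivFinOfCardEq (rfl : Fintype.card M16 = 16))).toMonoidHom.comp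
    (MulAction.toPermHom M16 M16)

theorem regRep_inj : Function.Injective regRep := by
  exact ((permCongrHom _).injective).comp
    (fun g h hh => MulAction.toPerm_injective (α := M16) (β := M16) hh)

end LowerM16

/-! ### minDeg values -/

theorem minDegG_eq : minDeg GrpG.G = 12 := by
  have hmem : 12 ∈ {n | ∃ f : GrpG.G →* Equiv.Perm (Fin n), Function.Injective f} :=
    ⟨UpperG.hG, UpperG.hG_inj⟩
  refine le_antisymm (Nat.sInf_le hmem) (le_csInf ⟨12, hmem⟩ ?_)
  rintro m ⟨f, hf⟩
  exact LowerM32.lower32 (f.comp GrpG.e32.symm.toMonoidHom) (hf.comp GrpG.e32.symm.injective)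

theorem minDegGb_eq : minDeg GrpGbar.Gb = 16 := by
  have hmem : 16 ∈ {n | ∃ f : GrpGbar.Gb →* Equiv.Perm (Fin n), Function.Injective f} :=
    ⟨LowerM16.regRep.comp GrpGbar.e16.toMonoidHom,
      LowerM16.regRep_inj.comp GrpGbar.e16.injective⟩
  refine le_antisymm (Nat.sInf_le hmem) (le_csInf ⟨16, hmem⟩ ?_)
  rintro m ⟨f, hf⟩
  exact LowerM16.lower16 (f.comp GrpGbar.e16.symm.toMonoidHom) (hf.comp GrpGbar.e16.symm.injective)


/-- The group `G = ⟨x, y | x⁸ = y⁴ = 1, xʸ = x⁻¹⟩` of order 32 has minimal degree 12, and its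
quotient by `⟨x⁴y²⟩` is isomorphic to `⟨x, y | x⁸ = y⁴ = 1, y² = x⁴, xʸ = x⁻¹⟩`,
which has minimal degree 16; hence `G` is exceptional. -/
theorem exceptional_group_order_32 :
    Nat.card (PresentedGroup relsG) = 32 ∧
    minDeg (PresentedGroup relsG) = 12 ∧
    Nonempty ((PresentedGroup relsG ⧸ Subgroup.normalClosure
        {(PresentedGroup.of 0 : PresentedGroup relsG) ^ 4 * (PresentedGroup.of 1) ^ 2}) ≃*
      PresentedGroup relsGbar) ∧
    minDeg (PresentedGroup relsGbar) = 16 :=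
  ⟨GrpG.cardG, minDegG_eq, ⟨QuotIso.quotIso⟩, minDegGb_eq⟩
end

section
/- Let p be an odd prime and E₂ = ⟨x,y,z,n | x^{p²}=y^p=z^{p²}=n^p=1, x^p=z^p n, [x,y]=x^p, [x,z]=y, [y,z]=[x,n]=[y,n]=[z,n]=1⟩. Then Z(E₂) = ⟨x^p, n⟩ ≅ ℤ_p × ℤ_p. -/
/-- Commutator `[a,b] = a⁻¹b⁻¹ab`. -/
def comm' {G : Type*} [Group G] (a b : G) : G := a⁻¹ * b⁻¹ * a * b

namespace E2defs

/-- Free generators: `0 ↦ x`, `1 ↦ y`, `2 ↦ z`, `3 ↦ n`. -/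
abbrev x : FreeGroup (Fin 4) := FreeGroup.of 0
abbrev y : FreeGroup (Fin 4) := FreeGroup.of 1
abbrev z : FreeGroup (Fin 4) := FreeGroup.of 2
abbrev n : FreeGroup (Fin 4) := FreeGroup.of 3

/-- Relations of `E₂ = ⟨x,y,z,n | x^{p²}=y^p=z^{p²}=n^p=1, x^p=z^p n, [x,y]=x^p, [x,z]=y,
[y,z]=[x,n]=[y,n]=[z,n]=1⟩`. -/
def rels (p : ℕ) : Set (FreeGroup (Fin 4)) :=
  {x ^ (p ^ 2), y ^ p, z ^ (p ^ 2), n ^ p,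
   x ^ p * (z ^ p * n)⁻¹,
   comm' x y * (x ^ p)⁻¹,
   comm' x z * y⁻¹,
   comm' y z, comm' x n, comm' y n, comm' z n}

/-- Free generators of `G₂`: `0 ↦ x`, `1 ↦ y`, `2 ↦ z`. -/
abbrev x3 : FreeGroup (Fin 3) := FreeGroup.of 0
abbrev y3 : FreeGroup (Fin 3) := FreeGroup.of 1
abbrev z3 : FreeGroup (Fin 3) := FreeGroup.of 2

/-- Relations of `G₂ = ⟨x,y,z | x^{p²}=y^p=z^{p²}=1, z^p=x^p, [x,y]=x^p, [x,z]=y, [y,z]=1⟩`. -/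
def relsG2 (p : ℕ) : Set (FreeGroup (Fin 3)) :=
  {x3 ^ (p ^ 2), y3 ^ p, z3 ^ (p ^ 2),
   z3 ^ p * (x3 ^ p)⁻¹,
   comm' x3 y3 * (x3 ^ p)⁻¹,
   comm' x3 z3 * y3⁻¹,
   comm' y3 z3}

end E2defs

/-- The group `E₂` of order `p⁵`. -/
abbrev E2 (p : ℕ) := PresentedGroup (E2defs.rels p)

/-- The group `G₂` of order `p⁴`. -/
abbrev G2 (p : ℕ) := PresentedGroup (E2defs.relsG2 p)

/-- Generators of `E₂`. -/
def xE (p : ℕ) : E2 p := PresentedGroup.of 0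
def yE (p : ℕ) : E2 p := PresentedGroup.of 1
def zE (p : ℕ) : E2 p := PresentedGroup.of 2
def nE (p : ℕ) : E2 p := PresentedGroup.of 3


lemma comm'_eq {G : Type*} [Group G] {a b w : G} (h : a * b = b * (a * w)) :
    comm' a b = w := by
  have h2 : a⁻¹ * b⁻¹ * a * b = a⁻¹ * b⁻¹ * (a * b) := by group
  rw [comm', h2, h]
  group

lemma comm'_eq_one {G : Type*} [Group G] {a b : G} (h : a * b = b * a) :
    comm' a b = 1 := comm'_eq (by rw [mul_one, h])


namespace E2proof

variable (p : ℕ)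

abbrev R (p : ℕ) := ZMod (p ^ 2)

noncomputable def hh : R p := (2 : R p)⁻¹

def pi : R p →+* ZMod p := ZMod.castHom (dvd_pow_self p two_ne_zero) (ZMod p)

lemma Psq : (p : R p) * (p : R p) = 0 := by
  have h : ((p ^ 2 : ℕ) : R p) = 0 := ZMod.natCast_self _
  push_cast at h
  linear_combination h

lemma pmul_mod (m : ℕ) : (p : R p) * ((m % p : ℕ) : R p) = (p : R p) * (m : R p) := by
  conv_rhs => rw [← Nat.mod_add_div m p]
  push_cast
  linear_combination (-((m / p : ℕ) : R p)) * Psq p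

variable [NeZero p]

lemma iot_add (b b' : ZMod p) :
    (p : R p) * (((b + b').val : ℕ) : R p) = (p : R p) * ((b.val : ℕ) : R p) + (p : R p) * ((b'.val : ℕ) : R p) := by
  rw [ZMod.val_add, pmul_mod]
  push_cast
  ring

omit [NeZero p] in
noncomputable example : True := trivial

def iotA : ZMod p →+ R p := AddMonoidHom.mk' (fun b => (p : R p) * (b.val : R p)) (iot_add p)

lemma iotA_apply (b : ZMod p) : iotA p b = (p : R p) * (b.val : R p) := rfl

lemma pi_iotA (b : ZMod p) : pi p (iotA p b) = 0 := by
  simp [iotA_apply, pi, map_mul]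

lemma pmul_iotA (b : ZMod p) : (p : R p) * iotA p b = 0 := by
  rw [iotA_apply, ← mul_assoc, Psq, zero_mul]

lemma iotA_pi (a : R p) : iotA p (pi p a) = (p : R p) * a := by
  haveI : NeZero (p ^ 2) := ⟨pow_ne_zero 2 (NeZero.ne p)⟩
  have h0 : pi p a = ((a.val : ℕ) : ZMod p) := by
    rw [pi, ZMod.castHom_apply, ← ZMod.natCast_val]
  have h1 : (pi p a).val = a.val % p := by
    rw [h0, ZMod.val_natCast]
  rw [iotA_apply, h1, pmul_mod]
  congr 1
  rw [ZMod.natCast_val, ZMod.cast_id]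

lemma pi_p : pi p ((p : R p)) = 0 := by simp [pi]

end E2proof

namespace E2proof2
open E2proof

variable (p : ℕ)

lemma iotA_mul_iotA [NeZero p] (b b' : ZMod p) : iotA p b * iotA p b' = 0 := by
  rw [iotA_apply, iotA_apply]
  have := Psq p
  linear_combination ((b.val : R p) * (b'.val : R p)) * this

@[ext]
structure C (p : ℕ) where
  a : ZMod (p ^ 2)
  b : ZMod p
  c : ZMod (p ^ 2)

variable [NeZero p] [Fact (Odd p)]

lemma two_hh : (2 : R p) * hh p = 1 := by
  rw [hh]
  refine ZMod.mul_inv_of_unit _ ?_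
  have : IsUnit ((2 : ℕ) : ZMod (p^2)) := by
    rw [ZMod.isUnit_iff_coprime]
    exact Nat.coprime_two_left.2 ((Fact.out : Odd p).pow)
  simpa using this

noncomputable instance : Mul (C p) := ⟨fun u v =>
  ⟨u.a + v.a + (p : R p) * u.c * (v.a * v.a - v.a) * hh p - iotA p u.b * v.a,
   u.b + v.b - pi p u.c * pi p v.a,
   u.c + v.c⟩⟩

noncomputable instance : One (C p) := ⟨⟨0, 0, 0⟩⟩

noncomputable instance : Inv (C p) := ⟨fun u =>
  ⟨-u.a + (p : R p) * u.c * (u.a * u.a - u.a) * hh p - iotA p u.b * u.a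
      - (p : R p) * u.c * u.a * u.a,
   -u.b - pi p u.c * pi p u.a,
   -u.c⟩⟩

lemma mul_def (a a' : R p) (b b' : ZMod p) (c c' : R p) :
    ((⟨a, b, c⟩ : C p) * (⟨a', b', c'⟩ : C p)) =
      (⟨a + a' + (p : R p) * c * (a' * a' - a') * hh p - iotA p b * a',
        b + b' - pi p c * pi p a',
        c + c'⟩ : C p) := rfl

lemma one_def : (1 : C p) = (⟨0, 0, 0⟩ : C p) := rfl

lemma inv_def (a : R p) (b : ZMod p) (c : R p) :
    ((⟨a, b, c⟩ : C p)⁻¹) =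
      (⟨-a + (p : R p) * c * (a * a - a) * hh p - iotA p b * a - (p : R p) * c * a * a,
        -b - pi p c * pi p a,
        -c⟩ : C p) := rfl

lemma Cassoc (u v w : C p) : u * v * w = u * (v * w) := by
  obtain ⟨a1, b1, c1⟩ := u
  obtain ⟨a2, b2, c2⟩ := v
  obtain ⟨a3, b3, c3⟩ := w
  have hpp := Psq p
  have h2 := two_hh p
  have hpu1 := pmul_iotA p b1
  have hpu2 := pmul_iotA p b2
  have hu12 := iotA_mul_iotA p b1 b2
  simp only [mul_def, map_add, map_sub, map_mul, pi_p, pi_iotA, zero_mul, mul_zero]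
  rw [show pi p c1 * pi p a2 = pi p (c1 * a2) from (map_mul _ _ _).symm, iotA_pi]
  rw [C.mk.injEq]
  refine ⟨?_, ?_, ?_⟩
  · set P := (p : R p)
    set h := hh p
    set u1 := iotA p b1
    set u2 := iotA p b2
    linear_combination
      (-(h^2*a3*c1*c2) + 3*h^2*a3^2*c1*c2 - 2*h^2*a3^2*c1*c2*u2 - 2*h^2*a3^3*c1*c2
        + 2*h^2*a3^3*c1*c2*u2 + 2*h^2*a2*a3*c1*c2 - 2*h^2*a2*a3^2*c1*c2
        - P*h^3*a3^2*c1*c2^2 + 2*P*h^3*a3^3*c1*c2^2 - P*h^3*a3^4*c1*c2^2) * hpp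
      + (-(h*a3*c2) + h*a3^2*c2) * hpu1
      + (-(h*a3*c1) + 2*h*a3^2*c1 - h*a3^2*c1*u2 + 2*h*a2*a3*c1) * hpu2
      + (-a3) * hu12
      + (-(P*a2*a3*c1)) * h2
  · simp only [map_mul]
    ring
  · ring

lemma Cone_mul (u : C p) : 1 * u = u := by
  obtain ⟨a, b, c⟩ := u
  rw [one_def, mul_def, C.mk.injEq]
  refine ⟨by simp, by simp, by simp⟩

lemma Cinv_mul (u : C p) : u⁻¹ * u = 1 := by
  obtain ⟨a, b, c⟩ := u
  rw [inv_def, mul_def, one_def, C.mk.injEq]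
  refine ⟨?_, ?_, ?_⟩
  · simp only [map_sub, map_neg, map_mul]
    rw [show pi p c * pi p a = pi p (c * a) from (map_mul _ _ _).symm, iotA_pi]
    ring
  · simp only [map_neg]
    ring
  · ring

noncomputable instance : Group (C p) := Group.ofLeftAxioms (Cassoc p) (Cone_mul p) (Cinv_mul p)



section Gens
variable (p : ℕ) [Fact p.Prime] [Fact (Odd p)]

noncomputable def X' : C p := ⟨1, 0, 0⟩
noncomputable def Y' : C p := ⟨0, 1, 0⟩
noncomputable def Z' : C p := ⟨0, 0, 1⟩
noncomputable def N' : C p := ⟨(p : R p), 0, -(p : R p)⟩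

lemma iotA_zero : iotA p (0 : ZMod p) = 0 := map_zero _

lemma iotA_one : iotA p (1 : ZMod p) = (p : R p) := by
  rw [iotA_apply, ZMod.val_one]
  simp

lemma Xpow (k : ℕ) : (X' p) ^ k = (⟨(k : R p), 0, 0⟩ : C p) := by
  induction k with
  | zero => rw [pow_zero, one_def]; push_cast; rfl
  | succ k ih =>
      rw [pow_succ, ih, X', mul_def, C.mk.injEq]
      refine ⟨by push_cast; simp, by simp, by simp⟩

lemma Ypow (k : ℕ) : (Y' p) ^ k = (⟨0, (k : ZMod p), 0⟩ : C p) := by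
  induction k with
  | zero => rw [pow_zero, one_def]; push_cast; rfl
  | succ k ih =>
      rw [pow_succ, ih, Y', mul_def, C.mk.injEq]
      refine ⟨by simp, by push_cast; simp, by simp⟩

lemma Zpow (k : ℕ) : (Z' p) ^ k = (⟨0, 0, (k : R p)⟩ : C p) := by
  induction k with
  | zero => rw [pow_zero, one_def]; push_cast; rfl
  | succ k ih =>
      rw [pow_succ, ih, Z', mul_def, C.mk.injEq]
      refine ⟨by simp, by simp [pi_p], by push_cast; simp⟩

lemma Npow (k : ℕ) : (N' p) ^ k = (⟨(k : R p) * (p : R p), 0, -((k : R p) * (p : R p))⟩ : C p) := by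
  have hpp := Psq p
  induction k with
  | zero => rw [pow_zero, one_def]; rw [C.mk.injEq]; push_cast; refine ⟨by ring, rfl, by ring⟩
  | succ k ih =>
      rw [pow_succ, ih, N', mul_def, C.mk.injEq]
      refine ⟨?_, ?_, ?_⟩
      · push_cast
        simp only [iotA_zero, zero_mul, sub_zero]
        linear_combination (-(((k:R p)) * hh p * ((p:R p)*(p:R p) - (p:R p)))) * hpp
      · simp [pi_p]
      · push_cast; ring

end Gens
end E2proof2


namespace E2proof2
section RelsC
open E2proof
variable (p : ℕ) [Fact p.Prime] [Fact (Odd p)]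

lemma hXpp : (X' p) ^ (p ^ 2) = 1 := by
  rw [Xpow, one_def, C.mk.injEq]
  exact ⟨ZMod.natCast_self _, rfl, rfl⟩

lemma hYp : (Y' p) ^ p = 1 := by
  rw [Ypow, one_def, C.mk.injEq]
  exact ⟨rfl, ZMod.natCast_self _, rfl⟩

lemma hZpp : (Z' p) ^ (p ^ 2) = 1 := by
  rw [Zpow, one_def, C.mk.injEq]
  exact ⟨rfl, rfl, ZMod.natCast_self _⟩

lemma hNp : (N' p) ^ p = 1 := by
  rw [Npow, one_def, C.mk.injEq]
  exact ⟨Psq p, rfl, by rw [Psq]; ring⟩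

lemma hXp_eq : (X' p) ^ p = (Z' p) ^ p * N' p := by
  have hpp := Psq p
  rw [Xpow, Zpow, N', mul_def, C.mk.injEq]
  refine ⟨?_, ?_, ?_⟩
  · simp only [iotA_zero, zero_mul, sub_zero]
    linear_combination (-(hh p) * ((p : R p) * (p : R p) - (p:R p))) * hpp
  · simp [pi_p]
  · ring

lemma hXY : X' p * Y' p = Y' p * (X' p * (X' p) ^ p) := by
  have hpp := Psq p
  rw [Xpow]
  simp only [X', Y', mul_def, C.mk.injEq, iotA_zero, iotA_one, map_zero, map_one, pi_p]
  refine ⟨by linear_combination hpp, by ring, by ring⟩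

lemma hXZ : X' p * Z' p = Z' p * (X' p * Y' p) := by
  simp only [X', Y', Z', mul_def, C.mk.injEq, iotA_zero, iotA_one, map_zero, map_one, pi_p,
    map_add, map_sub, map_mul, map_neg, pi_iotA, zero_mul, mul_zero, add_zero, zero_add,
    sub_zero, one_mul, mul_one]
  refine ⟨by ring, by ring, trivial⟩

lemma hYZ : Y' p * Z' p = Z' p * Y' p := by
  simp only [Y', Z', mul_def, C.mk.injEq, iotA_zero, iotA_one, map_zero, map_one, pi_p]
  refine ⟨by ring, by ring, by ring⟩

lemma hXN : X' p * N' p = N' p * X' p := by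
  simp only [X', N', mul_def, C.mk.injEq, iotA_zero, iotA_one, map_zero, map_one, map_neg, pi_p]
  refine ⟨by ring, by ring, by ring⟩

lemma hYN : Y' p * N' p = N' p * Y' p := by
  have hpp := Psq p
  simp only [Y', N', mul_def, C.mk.injEq, iotA_zero, iotA_one, map_zero, map_one, map_neg, pi_p]
  refine ⟨by linear_combination -hpp, by ring, by ring⟩

lemma hZN : Z' p * N' p = N' p * Z' p := by
  have hpp := Psq p
  simp only [Z', N', mul_def, C.mk.injEq, iotA_zero, iotA_one, map_zero, map_one, map_neg, pi_p]
  refine ⟨by linear_combination (((p:R p) - 1) * hh p) * hpp, by ring, by ring⟩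

noncomputable def fC : Fin 4 → C p := ![X' p, Y' p, Z' p, N' p]

lemma hrels : ∀ r ∈ E2defs.rels p, FreeGroup.lift (fC p) r = 1 := by
  intro r hr
  have e0 : FreeGroup.lift (fC p) E2defs.x = X' p := by simp [fC]
  have e1 : FreeGroup.lift (fC p) E2defs.y = Y' p := by simp [fC]
  have e2 : FreeGroup.lift (fC p) E2defs.z = Z' p := by simp [fC]
  have e3 : FreeGroup.lift (fC p) E2defs.n = N' p := by simp [fC]
  have c01 : FreeGroup.lift (fC p) (comm' E2defs.x E2defs.y) = comm' (X' p) (Y' p) := by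
    simp only [comm', map_mul, map_inv, e0, e1]
  have c02 : FreeGroup.lift (fC p) (comm' E2defs.x E2defs.z) = comm' (X' p) (Z' p) := by
    simp only [comm', map_mul, map_inv, e0, e2]
  have c12 : FreeGroup.lift (fC p) (comm' E2defs.y E2defs.z) = comm' (Y' p) (Z' p) := by
    simp only [comm', map_mul, map_inv, e1, e2]
  have c03 : FreeGroup.lift (fC p) (comm' E2defs.x E2defs.n) = comm' (X' p) (N' p) := by
    simp only [comm', map_mul, map_inv, e0, e3]
  have c13 : FreeGroup.lift (fC p) (comm' E2defs.y E2defs.n) = comm' (Y' p) (N' p) := by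
    simp only [comm', map_mul, map_inv, e1, e3]
  have c23 : FreeGroup.lift (fC p) (comm' E2defs.z E2defs.n) = comm' (Z' p) (N' p) := by
    simp only [comm', map_mul, map_inv, e2, e3]
  simp only [E2defs.rels, Set.mem_insert_iff, Set.mem_singleton_iff] at hr
  rcases hr with rfl|rfl|rfl|rfl|rfl|rfl|rfl|rfl|rfl|rfl|rfl
  · rw [map_pow, e0, hXpp]
  · rw [map_pow, e1, hYp]
  · rw [map_pow, e2, hZpp]
  · rw [map_pow, e3, hNp]
  · rw [map_mul, map_inv, map_mul, map_pow, map_pow, e0, e2, e3, hXp_eq]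
    group
  · rw [map_mul, map_inv, map_pow, e0, c01, comm'_eq (hXY p)]
    simp
  · rw [map_mul, map_inv, e1, c02, comm'_eq (hXZ p)]
    simp
  · rw [c12, comm'_eq_one (hYZ p)]
  · rw [c03, comm'_eq_one (hXN p)]
  · rw [c13, comm'_eq_one (hYN p)]
  · rw [c23, comm'_eq_one (hZN p)]

noncomputable def theta : E2 p →* C p := PresentedGroup.toGroup (hrels p)

lemma theta_x : theta p (xE p) = X' p := by
  rw [theta, xE, PresentedGroup.toGroup.of]; simp [fC]

lemma theta_y : theta p (yE p) = Y' p := by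
  rw [theta, yE, PresentedGroup.toGroup.of]; simp [fC]

lemma theta_z : theta p (zE p) = Z' p := by
  rw [theta, zE, PresentedGroup.toGroup.of]; simp [fC]

lemma theta_n : theta p (nE p) = N' p := by
  rw [theta, nE, PresentedGroup.toGroup.of]; simp [fC]

end RelsC
end E2proof2


namespace E2proof3
open E2proof E2proof2

variable (p : ℕ)

lemma relE {r : FreeGroup (Fin 4)} (h : r ∈ E2defs.rels p) :
    PresentedGroup.mk (E2defs.rels p) r = 1 := by
  have : r ∈ Subgroup.normalClosure (E2defs.rels p) := Subgroup.subset_normalClosure h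
  exact (QuotientGroup.eq_one_iff r).2 this

lemma mk_x : PresentedGroup.mk (E2defs.rels p) E2defs.x = xE p := rfl
lemma mk_y : PresentedGroup.mk (E2defs.rels p) E2defs.y = yE p := rfl
lemma mk_z : PresentedGroup.mk (E2defs.rels p) E2defs.z = zE p := rfl
lemma mk_n : PresentedGroup.mk (E2defs.rels p) E2defs.n = nE p := rfl

lemma R1 : (xE p) ^ (p ^ 2) = 1 := by
  have h := relE p (r := E2defs.x ^ (p ^ 2)) (by simp [E2defs.rels])
  rwa [map_pow, mk_x] at h

lemma R2 : (yE p) ^ p = 1 := by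
  have h := relE p (r := E2defs.y ^ p) (by simp [E2defs.rels])
  rwa [map_pow, mk_y] at h

lemma R3 : (zE p) ^ (p ^ 2) = 1 := by
  have h := relE p (r := E2defs.z ^ (p ^ 2)) (by simp [E2defs.rels])
  rwa [map_pow, mk_z] at h

lemma R4 : (nE p) ^ p = 1 := by
  have h := relE p (r := E2defs.n ^ p) (by simp [E2defs.rels])
  rwa [map_pow, mk_n] at h

lemma R5 : (xE p) ^ p = (zE p) ^ p * nE p := by
  have h := relE p (r := E2defs.x ^ p * (E2defs.z ^ p * E2defs.n)⁻¹) (by simp [E2defs.rels])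
  rw [map_mul, map_inv, map_mul, map_pow, map_pow, mk_x, mk_z, mk_n] at h
  rwa [mul_inv_eq_one] at h

lemma R6 : comm' (xE p) (yE p) = (xE p) ^ p := by
  have h := relE p (r := comm' E2defs.x E2defs.y * (E2defs.x ^ p)⁻¹) (by simp [E2defs.rels])
  simp only [comm', map_mul, map_inv, map_pow, mk_x, mk_y] at h
  rw [mul_inv_eq_one] at h
  simpa [comm'] using h

lemma R7 : comm' (xE p) (zE p) = yE p := by
  have h := relE p (r := comm' E2defs.x E2defs.z * E2defs.y⁻¹) (by simp [E2defs.rels])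
  simp only [comm', map_mul, map_inv, map_pow, mk_x, mk_y, mk_z] at h
  rw [mul_inv_eq_one] at h
  simpa [comm'] using h

lemma R8 : comm' (yE p) (zE p) = 1 := by
  have h := relE p (r := comm' E2defs.y E2defs.z) (by simp [E2defs.rels])
  simpa only [comm', map_mul, map_inv, mk_y, mk_z] using h

lemma R9 : comm' (xE p) (nE p) = 1 := by
  have h := relE p (r := comm' E2defs.x E2defs.n) (by simp [E2defs.rels])
  simpa only [comm', map_mul, map_inv, mk_x, mk_n] using h

lemma R10 : comm' (yE p) (nE p) = 1 := by
  have h := relE p (r := comm' E2defs.y E2defs.n) (by simp [E2defs.rels])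
  simpa only [comm', map_mul, map_inv, mk_y, mk_n] using h

lemma R11 : comm' (zE p) (nE p) = 1 := by
  have h := relE p (r := comm' E2defs.z E2defs.n) (by simp [E2defs.rels])
  simpa only [comm', map_mul, map_inv, mk_z, mk_n] using h

lemma mul_eq_of_comm' {G : Type*} [Group G] {a b w : G} (h : comm' a b = w) :
    a * b = b * (a * w) := by
  rw [← h, comm']
  group

lemma comm_of_comm' {G : Type*} [Group G] {a b : G} (h : comm' a b = 1) :
    Commute a b := by
  have := mul_eq_of_comm' h
  rw [mul_one] at this
  exact this

lemma cXY : xE p * yE p = yE p * (xE p * (xE p) ^ p) := mul_eq_of_comm' (R6 p)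
lemma cXZ : xE p * zE p = zE p * (xE p * yE p) := mul_eq_of_comm' (R7 p)
lemma cYZ : Commute (yE p) (zE p) := comm_of_comm' (R8 p)
lemma cXN : Commute (xE p) (nE p) := comm_of_comm' (R9 p)
lemma cYN : Commute (yE p) (nE p) := comm_of_comm' (R10 p)
lemma cZN : Commute (zE p) (nE p) := comm_of_comm' (R11 p)

lemma N_central : nE p ∈ Subgroup.center (E2 p) := by
  rw [Subgroup.mem_center_iff]
  intro g
  have hg : g ∈ Subgroup.centralizer {nE p} := by
    refine PresentedGroup.generated_by (E2defs.rels p) (Subgroup.centralizer {nE p}) ?_ g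
    intro j
    rw [Subgroup.mem_centralizer_iff]
    intro h hh0
    rcases hh0 with rfl
    fin_cases j
    · exact (cXN p).symm.eq
    · exact (cYN p).symm.eq
    · exact (cZN p).symm.eq
    · rfl
  exact (Subgroup.mem_centralizer_iff.1 hg (nE p) rfl).symm

lemma pow_swap_Y (k : ℕ) : (xE p) ^ k * yE p = yE p * ((xE p) ^ (p + 1)) ^ k := by
  induction k with
  | zero => simp
  | succ k ih =>
      have h1 : (xE p) ^ (k + 1) * yE p = (xE p) ^ k * (xE p * yE p) := by
        rw [pow_succ]; group
      rw [h1, cXY]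
      have h2 : xE p * (xE p) ^ p = (xE p) ^ (p + 1) := by rw [pow_succ']
      rw [h2, ← mul_assoc, ih]
      rw [mul_assoc, ← pow_succ]

lemma Xp_comm_Y : Commute ((xE p) ^ p) (yE p) := by
  have h := pow_swap_Y p p
  have h2 : ((xE p) ^ (p + 1)) ^ p = (xE p) ^ p := by
    rw [← pow_mul]
    have : (p + 1) * p = p ^ 2 + p := by ring
    rw [this, pow_add, R1, one_mul]
  rw [h2] at h
  exact h

lemma Xp_central : (xE p) ^ p ∈ Subgroup.center (E2 p) := by
  rw [Subgroup.mem_center_iff]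
  intro g
  have hg : g ∈ Subgroup.centralizer {(xE p) ^ p} := by
    refine PresentedGroup.generated_by (E2defs.rels p) (Subgroup.centralizer {(xE p) ^ p}) ?_ g
    intro j
    rw [Subgroup.mem_centralizer_iff]
    intro h hh0
    rcases hh0 with rfl
    fin_cases j
    · exact ((Commute.refl (xE p)).pow_left p).eq
    · exact (Xp_comm_Y p).eq
    · rw [R5]
      have h1 : Commute (zE p) ((zE p) ^ p) := Commute.pow_right (Commute.refl _) p
      have h2 : Commute (zE p) ((zE p) ^ p * nE p) := h1.mul_right (cZN p)
      exact h2.symm.eq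
    · exact ((cXN p).pow_left p).eq
  exact (Subgroup.mem_centralizer_iff.1 hg ((xE p) ^ p) rfl).symm

end E2proof3


namespace E2proof4
open E2proof E2proof2 E2proof3

lemma inv_eq_pow {G : Type*} [Group G] {g : G} {m : ℕ} (h1 : 1 ≤ m) (hm : g ^ m = 1) :
    g⁻¹ = g ^ (m - 1) :=
  inv_eq_of_mul_eq_one_right (by rw [← pow_succ', Nat.sub_add_cancel h1, hm])

lemma cswap {G : Type*} [Group G] {c : G} (hc : c ∈ Subgroup.center G) (u t : G) :
    c * (u * t) = u * (c * t) := by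
  rw [← mul_assoc, ← (Subgroup.mem_center_iff.1 hc u), mul_assoc]

lemma comm_swap {G : Type*} [Group G] {u v : G} (h : u * v = v * u) (t : G) :
    u * (v * t) = v * (u * t) := by
  rw [← mul_assoc, h, mul_assoc]

lemma pow_collapse {G : Type*} [Group G] (a : G) (m n : ℕ) (t : G) :
    a ^ m * (a ^ n * t) = a ^ (m + n) * t := by rw [← mul_assoc, ← pow_add]

lemma pow_collapse1 {G : Type*} [Group G] (a : G) (n : ℕ) (t : G) :
    a * (a ^ n * t) = a ^ (n + 1) * t := by rw [← mul_assoc, ← pow_succ']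

lemma pow_collapse1r {G : Type*} [Group G] (a : G) (n : ℕ) (t : G) :
    a ^ n * (a * t) = a ^ (n + 1) * t := by rw [← mul_assoc, ← pow_succ]

section NF
variable (p : ℕ) [Fact p.Prime]

local notation "X" => xE p
local notation "Y" => yE p
local notation "Z" => zE p
local notation "N" => nE p
local notation "W" => (xE p) ^ p

lemma hp1 : 1 ≤ p := (Fact.out : p.Prime).one_lt.le

lemma hpsq1 : 1 ≤ p ^ 2 := Nat.one_le_pow _ _ (Fact.out : p.Prime).pos

lemma Wpow_central (e : ℕ) : W ^ e ∈ Subgroup.center (E2 p) :=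
  pow_mem (Xp_central p) e

lemma Npow_central (l : ℕ) : N ^ l ∈ Subgroup.center (E2 p) :=
  pow_mem (N_central p) l

lemma Wp_one : W ^ p = 1 := by
  rw [← pow_mul]
  have h : p * p = p ^ 2 := by ring
  rw [h, R1]

lemma Winv : W⁻¹ = W ^ (p - 1) := inv_eq_pow (hp1 p) (Wp_one p)

lemma Yinv : Y⁻¹ = Y ^ (p - 1) := inv_eq_pow (hp1 p) (R2 p)

lemma Ninv : N⁻¹ = N ^ (p - 1) := inv_eq_pow (hp1 p) (R4 p)

lemma Xinv : X⁻¹ = X ^ (p ^ 2 - 1) := inv_eq_pow (hpsq1 p) (R1 p)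

lemma Zinv : Z⁻¹ = Z ^ (p ^ 2 - 1) := inv_eq_pow (hpsq1 p) (R3 p)

lemma Wpow_X (e : ℕ) : W ^ e = X ^ (p * e) := by rw [← pow_mul]

lemma stepYX : ∀ g : E2 p, Y * (X * g) = X * (W ^ (p - 1) * (Y * g)) := by
  have h1 : X * Y = Y * X * W := by rw [cXY]; group
  have h2 : Y * X = X * Y * W⁻¹ := by rw [h1]; group
  have hc : Y * W ^ (p - 1) = W ^ (p - 1) * Y :=
    Subgroup.mem_center_iff.1 (Wpow_central p (p - 1)) Y
  have h3 : Y * X = X * (W ^ (p - 1) * Y) := by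
    rw [h2, Winv, ← hc, ← mul_assoc]
  intro g
  rw [← mul_assoc, h3]
  simp only [mul_assoc]

lemma stepZX : ∀ g : E2 p, Z * (X * g) = X * (Y ^ (p - 1) * (Z * g)) := by
  have h1 : Z * X = X * Z * Y⁻¹ := by rw [cXZ]; group
  have h3 : Z * X = X * (Y ^ (p - 1) * Z) := by
    rw [h1, mul_assoc, ← (cYZ p).inv_left.eq, Yinv]
  intro g
  rw [← mul_assoc, h3]
  simp only [mul_assoc]

lemma swapYXi (i : ℕ) : ∃ e : ℕ, ∀ g : E2 p, Y * (X ^ i * g) = X ^ i * (W ^ e * (Y * g)) := by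
  induction i with
  | zero => exact ⟨0, by simp⟩
  | succ i ih =>
      obtain ⟨e, he⟩ := ih
      refine ⟨e + (p - 1), fun g => ?_⟩
      calc Y * (X ^ (i + 1) * g)
          = Y * (X ^ i * (X * g)) := by rw [pow_succ, mul_assoc]
        _ = X ^ i * (W ^ e * (Y * (X * g))) := by rw [he]
        _ = X ^ i * (W ^ e * (X * (W ^ (p - 1) * (Y * g)))) := by rw [stepYX]
        _ = X ^ i * (X * (W ^ e * (W ^ (p - 1) * (Y * g)))) := by
            rw [cswap (Wpow_central p e)]
        _ = X ^ (i + 1) * (W ^ (e + (p - 1)) * (Y * g)) := by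
            rw [pow_collapse, pow_collapse1r]

lemma swapYeX (e : ℕ) : ∃ e' : ℕ, ∀ g : E2 p, Y ^ e * (X * g) = X * (W ^ e' * (Y ^ e * g)) := by
  induction e with
  | zero => exact ⟨0, by simp⟩
  | succ e ih =>
      obtain ⟨e', he'⟩ := ih
      refine ⟨e' + (p - 1), fun g => ?_⟩
      calc Y ^ (e + 1) * (X * g)
          = Y ^ e * (Y * (X * g)) := by rw [pow_succ, mul_assoc]
        _ = Y ^ e * (X * (W ^ (p - 1) * (Y * g))) := by rw [stepYX]
        _ = X * (W ^ e' * (Y ^ e * (W ^ (p - 1) * (Y * g)))) := by rw [he']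
        _ = X * (W ^ e' * (W ^ (p - 1) * (Y ^ e * (Y * g)))) := by
            rw [← cswap (Wpow_central p (p - 1))]
        _ = X * (W ^ (e' + (p - 1)) * (Y ^ (e + 1) * g)) := by
            rw [pow_collapse]
            rw [show (yE p) ^ e * ((yE p) * g) = (yE p) ^ (e + 1) * g from by
              rw [← mul_assoc, ← pow_succ]]

lemma swapZXi (i : ℕ) :
    ∃ e f : ℕ, ∀ g : E2 p, Z * (X ^ i * g) = X ^ i * (W ^ f * (Y ^ e * (Z * g))) := by
  induction i with
  | zero => exact ⟨0, 0, by simp⟩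
  | succ i ih =>
      obtain ⟨e, f, ih⟩ := ih
      obtain ⟨e', he'⟩ := swapYeX p e
      refine ⟨e + (p - 1), f + e', fun g => ?_⟩
      calc Z * (X ^ (i + 1) * g)
          = Z * (X ^ i * (X * g)) := by rw [pow_succ, mul_assoc]
        _ = X ^ i * (W ^ f * (Y ^ e * (Z * (X * g)))) := by rw [ih]
        _ = X ^ i * (W ^ f * (Y ^ e * (X * (Y ^ (p - 1) * (Z * g))))) := by rw [stepZX]
        _ = X ^ i * (W ^ f * (X * (W ^ e' * (Y ^ e * (Y ^ (p - 1) * (Z * g)))))) := by rw [he']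
        _ = X ^ i * (X * (W ^ f * (W ^ e' * (Y ^ e * (Y ^ (p - 1) * (Z * g)))))) := by
            rw [cswap (Wpow_central p f)]
        _ = X ^ (i + 1) * (W ^ (f + e') * (Y ^ (e + (p - 1)) * (Z * g))) := by
            rw [pow_collapse ((xE p) ^ p), pow_collapse (yE p), pow_collapse1r]

def TT : Set (E2 p) := {g | ∃ i j k l : ℕ, g = X ^ i * (Y ^ j * (Z ^ k * N ^ l))}

lemma one_TT : (1 : E2 p) ∈ TT p := ⟨0, 0, 0, 0, by simp⟩

lemma stabX : ∀ t ∈ TT p, X * t ∈ TT p := by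
  rintro t ⟨i, j, k, l, rfl⟩
  exact ⟨i + 1, j, k, l, by rw [pow_collapse1]⟩

lemma stabY : ∀ t ∈ TT p, Y * t ∈ TT p := by
  rintro t ⟨i, j, k, l, rfl⟩
  obtain ⟨e, he⟩ := swapYXi p i
  refine ⟨i + p * e, j + 1, k, l, ?_⟩
  rw [he, Wpow_X, pow_collapse, pow_collapse1]

lemma stabZ : ∀ t ∈ TT p, Z * t ∈ TT p := by
  rintro t ⟨i, j, k, l, rfl⟩
  obtain ⟨e, f, hef⟩ := swapZXi p i
  refine ⟨i + p * f, e + j, k + 1, l, ?_⟩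
  rw [hef, Wpow_X, pow_collapse]
  rw [comm_swap (((cYZ p).symm.pow_right j).eq), pow_collapse1, pow_collapse]

lemma stabN : ∀ t ∈ TT p, N * t ∈ TT p := by
  rintro t ⟨i, j, k, l, rfl⟩
  refine ⟨i, j, k, l + 1, ?_⟩
  rw [cswap (N_central p), cswap (N_central p), cswap (N_central p), ← pow_succ']

lemma stab_pow {s : E2 p} (hs : ∀ t ∈ TT p, s * t ∈ TT p) (m : ℕ) :
    ∀ t ∈ TT p, s ^ m * t ∈ TT p := by
  induction m with
  | zero => intro t ht; simpa using ht
  | succ m ih =>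
      intro t ht
      have h := hs _ (ih t ht)
      rwa [pow_collapse1] at h

def M : Subgroup (E2 p) where
  carrier := {g | ∀ t ∈ TT p, g * t ∈ TT p ∧ g⁻¹ * t ∈ TT p}
  one_mem' := by
    intro t ht
    refine ⟨by simpa using ht, by simpa using ht⟩
  mul_mem' := by
    intro a b ha hb t ht
    constructor
    · rw [mul_assoc]
      exact (ha _ (hb t ht).1).1
    · rw [mul_inv_rev, mul_assoc]
      exact (hb _ ((ha t ht).2)).2
  inv_mem' := by
    intro a ha t ht
    refine ⟨(ha t ht).2, ?_⟩
    rw [inv_inv]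
    exact (ha t ht).1

lemma allNF (g : E2 p) : ∃ i j k l : ℕ, g = X ^ i * (Y ^ j * (Z ^ k * N ^ l)) := by
  have hM : g ∈ M p := by
    refine PresentedGroup.generated_by _ (M p) ?_ g
    intro jj
    fin_cases jj
    · exact fun t ht => ⟨stabX p t ht,
        by show (xE p)⁻¹ * t ∈ TT p; rw [Xinv]; exact stab_pow p (stabX p) _ t ht⟩
    · exact fun t ht => ⟨stabY p t ht,
        by show (yE p)⁻¹ * t ∈ TT p; rw [Yinv]; exact stab_pow p (stabY p) _ t ht⟩
    · exact fun t ht => ⟨stabZ p t ht,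
        by show (zE p)⁻¹ * t ∈ TT p; rw [Zinv]; exact stab_pow p (stabZ p) _ t ht⟩
    · exact fun t ht => ⟨stabN p t ht,
        by show (nE p)⁻¹ * t ∈ TT p; rw [Ninv]; exact stab_pow p (stabN p) _ t ht⟩
  have h1 := (hM 1 (one_TT p)).1
  rwa [mul_one] at h1

end NF
end E2proof4




namespace E2proof5
open E2proof E2proof2 E2proof3 E2proof4

section Fin
variable (p : ℕ) [Fact p.Prime] [Fact (Odd p)]

local notation "X" => xE p
local notation "Y" => yE p
local notation "Z" => zE p
local notation "N" => nE p
local notation "W" => (xE p) ^ p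

lemma mZN (k l : ℕ) :
    (⟨0, 0, (k : R p)⟩ : C p) * ⟨(l : R p) * (p : R p), 0, -((l : R p) * (p : R p))⟩ =
      ⟨(l : R p) * (p : R p), 0, (k : R p) - (l : R p) * (p : R p)⟩ := by
  have hpp := Psq p
  rw [mul_def, C.mk.injEq]
  refine ⟨?_, ?_, ?_⟩
  · simp only [iotA_zero, zero_mul, sub_zero, zero_add]
    linear_combination ((k : R p) * (l : R p) * (l : R p) * hh p * (p : R p)
      - (k : R p) * (l : R p) * hh p) * hpp
  · simp [pi_p, map_mul]
  · ring

lemma mYrest (j k l : ℕ) :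
    (⟨0, (j : ZMod p), 0⟩ : C p) *
        ⟨(l : R p) * (p : R p), 0, (k : R p) - (l : R p) * (p : R p)⟩ =
      ⟨(l : R p) * (p : R p), (j : ZMod p), (k : R p) - (l : R p) * (p : R p)⟩ := by
  rw [mul_def, C.mk.injEq]
  refine ⟨?_, ?_, ?_⟩
  · simp only [zero_mul, mul_zero, zero_add, add_zero, sub_zero, mul_one, one_mul]
    have hpj := pmul_iotA p ((j : ℕ) : ZMod p)
    linear_combination (-(l : R p)) * hpj
  · simp [pi_p, map_mul]
  · ring

lemma mXrest (i j k l : ℕ) :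
    (⟨(i : R p), 0, 0⟩ : C p) *
        ⟨(l : R p) * (p : R p), (j : ZMod p), (k : R p) - (l : R p) * (p : R p)⟩ =
      ⟨(i : R p) + (l : R p) * (p : R p), (j : ZMod p),
        (k : R p) - (l : R p) * (p : R p)⟩ := by
  rw [mul_def, C.mk.injEq]
  refine ⟨?_, ?_, ?_⟩
  · simp [iotA_zero]
  · simp [pi_p, map_mul]
  · ring

lemma theta_nf (i j k l : ℕ) :
    theta p (X ^ i * (Y ^ j * (Z ^ k * N ^ l))) =
      ⟨(i : R p) + (l : R p) * (p : R p), (j : ZMod p),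
        (k : R p) - (l : R p) * (p : R p)⟩ := by
  rw [map_mul, map_mul, map_mul, map_pow, map_pow, map_pow, map_pow,
    theta_x, theta_y, theta_z, theta_n, Xpow, Ypow, Zpow, Npow, mZN, mYrest, mXrest]

lemma iotA_eq_zero {b : ZMod p} (h : iotA p b = 0) : b = 0 := by
  have h2 : ((p * b.val : ℕ) : R p) = 0 := by
    push_cast
    rw [← iotA_apply]
    exact h
  have h3 : p ^ 2 ∣ p * b.val := by
    haveI : NeZero (p ^ 2) := ⟨pow_ne_zero 2 (NeZero.ne p)⟩
    exact (ZMod.natCast_eq_zero_iff _ _).1 h2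
  have hp0 : 0 < p := (Fact.out : p.Prime).pos
  have h4 : p ∣ b.val := by
    have h6 : p * p ∣ p * b.val := by rwa [sq] at h3
    exact (Nat.mul_dvd_mul_iff_left hp0).1 h6
  have h5 : b.val = 0 := Nat.eq_zero_of_dvd_of_lt h4 (ZMod.val_lt b)
  exact (ZMod.val_eq_zero b).1 h5

lemma pmul_eq_zero {a : R p} (h : (p : R p) * a = 0) : pi p a = 0 := by
  have h2 := iotA_pi p a
  rw [h] at h2
  exact iotA_eq_zero p h2

lemma central_nf {g : E2 p} (hg : g ∈ Subgroup.center (E2 p)) :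
    ∃ i j k l : ℕ, g = X ^ i * (Y ^ j * (Z ^ k * N ^ l)) ∧ p ∣ i ∧ p ∣ j ∧ p ∣ k := by
  obtain ⟨i, j, k, l, rfl⟩ := allNF p g
  set A : R p := (i : R p) + (l : R p) * (p : R p) with hA
  set B : ZMod p := (j : ZMod p) with hB
  set Cc : R p := (k : R p) - (l : R p) * (p : R p) with hCc
  have hX := Subgroup.mem_center_iff.1 hg (xE p)
  have hY := Subgroup.mem_center_iff.1 hg (yE p)
  have h1 : X' p * (⟨A, B, Cc⟩ : C p) = (⟨A, B, Cc⟩ : C p) * X' p := by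
    have h := congrArg (theta p) hX
    rwa [map_mul, theta_nf, map_mul, theta_nf, theta_x] at h
  have h2 : Y' p * (⟨A, B, Cc⟩ : C p) = (⟨A, B, Cc⟩ : C p) * Y' p := by
    have h := congrArg (theta p) hY
    rwa [map_mul, theta_nf, map_mul, theta_nf, theta_y] at h
  rw [X', mul_def, mul_def, C.mk.injEq] at h1
  rw [Y', mul_def, mul_def, C.mk.injEq] at h2
  obtain ⟨e1, e2, -⟩ := h1
  obtain ⟨f1, -, -⟩ := h2
  simp only [map_zero, map_one, zero_mul, mul_zero, mul_one, one_mul, zero_add, add_zero,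
    sub_zero, sub_self, iotA_zero, iotA_one] at e1 e2 f1
  have hB0 : iotA p B = 0 := by linear_combination e1
  have hC0 : pi p Cc = 0 := by linear_combination e2
  have hPA : (p : R p) * A = 0 := by linear_combination -f1
  have hj : p ∣ j := by
    have := iotA_eq_zero p hB0
    rw [hB] at this
    exact (ZMod.natCast_eq_zero_iff _ _).1 this
  have hk : p ∣ k := by
    have h3 := hC0
    rw [hCc, map_sub, map_mul, pi_p, mul_zero, sub_zero, map_natCast] at h3
    exact (ZMod.natCast_eq_zero_iff _ _).1 h3
  have hi : p ∣ i := by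
    have h3 := pmul_eq_zero p hPA
    rw [hA, map_add, map_mul, pi_p, mul_zero, add_zero, map_natCast] at h3
    exact (ZMod.natCast_eq_zero_iff _ _).1 h3
  exact ⟨i, j, k, l, rfl, hi, hj, hk⟩

lemma Zp_eq : Z ^ p = W * N ^ (p - 1) := by
  rw [← Ninv, R5]
  group

lemma central_WN {g : E2 p} (hg : g ∈ Subgroup.center (E2 p)) :
    ∃ a b : ℕ, g = W ^ a * N ^ b := by
  obtain ⟨i, j, k, l, rfl, ⟨i', rfl⟩, ⟨j', rfl⟩, ⟨k', rfl⟩⟩ := central_nf p hg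
  have hZ : Z ^ (p * k') = W ^ k' * N ^ ((p - 1) * k') := by
    rw [pow_mul, Zp_eq]
    have hcomm : Commute ((xE p) ^ p) ((nE p) ^ (p - 1)) :=
      Subgroup.mem_center_iff.1 (Npow_central p (p - 1)) _
    rw [hcomm.mul_pow, ← pow_mul (nE p)]
  refine ⟨i' + k', (p - 1) * k' + l, ?_⟩
  rw [pow_mul, pow_mul (yE p), R2, one_pow, one_mul, hZ,
    mul_assoc (((xE p) ^ p) ^ k'), pow_collapse, ← pow_add]

lemma theta_WN (a b : ℕ) :
    theta p (W ^ a * N ^ b) =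
      ⟨((p * a : ℕ) : R p) + ((b * p : ℕ) : R p), 0, -((b * p : ℕ) : R p)⟩ := by
  rw [map_mul, map_pow, map_pow, ← pow_mul, map_pow, theta_x, theta_n, Xpow, Npow]
  rw [mul_def, C.mk.injEq]
  refine ⟨?_, ?_, ?_⟩
  · push_cast
    simp [iotA_zero]
  · simp [pi_p, map_mul]
  · push_cast
    ring

lemma natCast_R_inj {m n : ℕ} (hm : m < p ^ 2) (hn : n < p ^ 2) (h : (m : R p) = n) :
    m = n := by
  have h2 := congrArg ZMod.val h
  rwa [ZMod.val_cast_of_lt hm, ZMod.val_cast_of_lt hn] at h2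

lemma WN_mul (a b c d : ℕ) :
    (W ^ a * N ^ b) * (W ^ c * N ^ d) = W ^ (a + c) * N ^ (b + d) := by
  rw [mul_assoc, comm_swap (Subgroup.mem_center_iff.1 (Wpow_central p c) ((nE p) ^ b)),
    pow_collapse, ← pow_add]

noncomputable def phi0 : Multiplicative (ZMod p × ZMod p) →* E2 p :=
  MonoidHom.mk' (fun s => W ^ ((Multiplicative.toAdd s).1.val) *
      N ^ ((Multiplicative.toAdd s).2.val)) (by
    intro s t
    have hWmod : ∀ u v : ZMod p, ((xE p) ^ p) ^ ((u + v).val) =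
        ((xE p) ^ p) ^ (u.val + v.val) := by
      intro u v
      rw [ZMod.val_add, ← pow_eq_pow_mod _ (Wp_one p)]
    have hNmod : ∀ u v : ZMod p, (nE p) ^ ((u + v).val) = (nE p) ^ (u.val + v.val) := by
      intro u v
      rw [ZMod.val_add, ← pow_eq_pow_mod _ (R4 p)]
    show W ^ ((Multiplicative.toAdd (s * t)).1.val) *
          N ^ ((Multiplicative.toAdd (s * t)).2.val) =
        (W ^ ((Multiplicative.toAdd s).1.val) * N ^ ((Multiplicative.toAdd s).2.val)) *
          (W ^ ((Multiplicative.toAdd t).1.val) * N ^ ((Multiplicative.toAdd t).2.val))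
    rw [WN_mul, toAdd_mul, Prod.fst_add, Prod.snd_add, hWmod, hNmod])

lemma phi0_apply (s : Multiplicative (ZMod p × ZMod p)) :
    phi0 p s = W ^ ((Multiplicative.toAdd s).1.val) * N ^ ((Multiplicative.toAdd s).2.val) := rfl

lemma phi0_mem_center (s : Multiplicative (ZMod p × ZMod p)) :
    phi0 p s ∈ Subgroup.center (E2 p) :=
  mul_mem (Wpow_central p _) (Npow_central p _)

noncomputable def phi : Multiplicative (ZMod p × ZMod p) →* Subgroup.center (E2 p) :=
  (phi0 p).codRestrict _ (phi0_mem_center p)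

lemma phi_injective : Function.Injective (phi p) := by
  intro s t h
  have h0 : phi0 p s = phi0 p t := congrArg Subtype.val h
  have hθ := congrArg (theta p) h0
  rw [phi0_apply, phi0_apply, theta_WN, theta_WN, C.mk.injEq] at hθ
  obtain ⟨e1, -, e3⟩ := hθ
  have hp0 : 0 < p := (Fact.out : p.Prime).pos
  have hlt : ∀ u : ZMod p, u.val * p < p ^ 2 := by
    intro u
    have h5 := ZMod.val_lt u
    nlinarith
  have hlt2 : ∀ u : ZMod p, p * u.val < p ^ 2 := by
    intro u
    have h5 := ZMod.val_lt u
    nlinarith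
  have e3' : ((Multiplicative.toAdd s).2.val * p : ℕ) = ((Multiplicative.toAdd t).2.val * p : ℕ) := by
    apply natCast_R_inj p (hlt _) (hlt _)
    have := neg_inj.1 e3
    exact_mod_cast this
  have hb : (Multiplicative.toAdd s).2.val = (Multiplicative.toAdd t).2.val :=
    Nat.eq_of_mul_eq_mul_right hp0 e3'
  have e1' : ((p * (Multiplicative.toAdd s).1.val : ℕ) : R p)
      = ((p * (Multiplicative.toAdd t).1.val : ℕ) : R p) := by
    have h4 : (((Multiplicative.toAdd s).2.val * p : ℕ) : R p)
        = (((Multiplicative.toAdd t).2.val * p : ℕ) : R p) := by rw [e3']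
    rw [h4] at e1
    exact add_right_cancel e1
  have ha : p * (Multiplicative.toAdd s).1.val = p * (Multiplicative.toAdd t).1.val :=
    natCast_R_inj p (hlt2 _) (hlt2 _) e1'
  have ha' : (Multiplicative.toAdd s).1.val = (Multiplicative.toAdd t).1.val :=
    Nat.eq_of_mul_eq_mul_left hp0 ha
  have hv := ZMod.val_injective p
  apply Multiplicative.toAdd.injective
  exact Prod.ext (hv ha') (hv hb)

lemma pow_val_natCast (gg : E2 p) (hgg : gg ^ p = 1) (a : ℕ) :
    gg ^ (((a : ZMod p)).val) = gg ^ a := by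
  rw [ZMod.val_natCast, ← pow_eq_pow_mod _ hgg]

lemma phi_surjective : Function.Surjective (phi p) := by
  rintro ⟨g, hg⟩
  obtain ⟨a, b, rfl⟩ := central_WN p hg
  refine ⟨Multiplicative.ofAdd ((a : ZMod p), (b : ZMod p)), ?_⟩
  apply Subtype.ext
  show phi0 p _ = _
  rw [phi0_apply]
  simp only [toAdd_ofAdd]
  rw [pow_val_natCast p _ (Wp_one p), pow_val_natCast p _ (R4 p)]

end Fin
end E2proof5

/-- `Z(E₂) = ⟨x^p, n⟩ ≅ ℤ_p × ℤ_p`. -/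
theorem center_E2 (p : ℕ) (hp : p.Prime) (hodd : Odd p) :
    Subgroup.center (E2 p) = Subgroup.closure {(xE p) ^ p, nE p} ∧
    Nonempty (Subgroup.center (E2 p) ≃* Multiplicative (ZMod p × ZMod p)) := by
  haveI : Fact p.Prime := ⟨hp⟩
  haveI : Fact (Odd p) := ⟨hodd⟩
  have part1 : Subgroup.center (E2 p) = Subgroup.closure {(xE p) ^ p, nE p} := by
    apply le_antisymm
    · intro g hg
      obtain ⟨i, j, k, l, rfl, ⟨i', rfl⟩, ⟨j', rfl⟩, ⟨k', rfl⟩⟩ := E2proof5.central_nf p hg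
      have hW : (xE p) ^ p ∈ Subgroup.closure {(xE p) ^ p, nE p} :=
        Subgroup.subset_closure (Set.mem_insert _ _)
      have hN : nE p ∈ Subgroup.closure {(xE p) ^ p, nE p} :=
        Subgroup.subset_closure (Set.mem_insert_of_mem _ (Set.mem_singleton _))
      have hZp : (zE p) ^ p ∈ Subgroup.closure {(xE p) ^ p, nE p} := by
        rw [E2proof5.Zp_eq]
        exact mul_mem hW (pow_mem hN _)
      refine mul_mem ?_ (mul_mem ?_ (mul_mem ?_ ?_))
      · rw [pow_mul]; exact pow_mem hW i'
      · rw [pow_mul, E2proof3.R2, one_pow]; exact one_mem _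
      · rw [pow_mul]; exact pow_mem hZp k'
      · exact pow_mem hN l
    · rw [Subgroup.closure_le]
      rintro s hs
      simp only [Set.mem_insert_iff, Set.mem_singleton_iff] at hs
      rcases hs with rfl | rfl
      · exact E2proof3.Xp_central p
      · exact E2proof3.N_central p
  refine ⟨part1, ?_⟩
  exact ⟨(MulEquiv.ofBijective (E2proof5.phi p)
    ⟨E2proof5.phi_injective p, E2proof5.phi_surjective p⟩).symm⟩
end

section
/- Let p be an odd prime and E₂ as presented. Then the subgroups H₁ = ⟨x,y⟩ and H₂ = ⟨y,z⟩ of E₂ both have index p², core(H₁) ∩ core(H₂) = {1}, and hence E₂ admits a faithful permutation representation of degree 2p². -/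
set_option linter.unusedSectionVars false
set_option linter.unreachableTactic false
set_option linter.unusedTactic false
set_option maxHeartbeats 1000000



namespace E2proof


@[ext] structure MM (p : ℕ) where
  c : ZMod (p^2)
  a : ZMod (p^2)
  b : ZMod p

namespace MM

variable {p : ℕ} [NeZero p]

instance : NeZero (p^2) := ⟨pow_ne_zero 2 (NeZero.ne p)⟩

def bb : ZMod (p^2) →+* ZMod p := ZMod.castHom (dvd_pow_self p two_ne_zero) (ZMod p)

def ff (t : ZMod p) : ZMod (p^2) := (p : ZMod (p^2)) * (t.val : ZMod (p^2))

lemma psq : (p : ZMod (p^2))^2 = 0 := by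
  have : ((p^2 : ℕ) : ZMod (p^2)) = 0 := ZMod.natCast_self _
  push_cast at this; exact this

lemma val_cast (s : ZMod p) : ((s.val : ℕ) : ZMod p) = s := ZMod.natCast_rightInverse s

lemma val_cast' (s : ZMod (p^2)) : ((s.val : ℕ) : ZMod (p^2)) = s := ZMod.natCast_rightInverse s

lemma ff_natCast (k : ℕ) : ff (k : ZMod p) = (p : ZMod (p^2)) * k := by
  unfold ff
  have h1 : (k : ℕ) = (k : ZMod p).val + p * (k / p) := by
    rw [ZMod.val_natCast]; exact (Nat.mod_add_div _ _).symm
  have h2 : ((k:ℕ) : ZMod (p^2)) = ((k : ZMod p).val : ZMod (p^2)) + p * (k/p : ℕ) := by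
    conv_lhs => rw [h1]
    push_cast; ring
  linear_combination (-(p : ZMod (p^2))) * h2 - ((k/p : ℕ) : ZMod (p^2)) * (psq (p := p))

lemma ff_add (s t : ZMod p) : ff (s + t) = ff s + ff t := by
  have h : s + t = ((s.val + t.val : ℕ) : ZMod p) := by push_cast [val_cast]; ring
  rw [h, ff_natCast]
  unfold ff; push_cast; ring

lemma ff_zero : ff (0 : ZMod p) = 0 := by simpa using ff_natCast (p := p) 0

lemma ff_neg (t : ZMod p) : ff (-t) = - ff t := by
  have h := ff_add (-t) t
  simp [ff_zero] at h
  linear_combination -h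

lemma ff_one : ff (1 : ZMod p) = p := by simpa using ff_natCast (p := p) 1

lemma bb_ff (t : ZMod p) : bb (ff t) = 0 := by
  unfold ff
  rw [map_mul, map_natCast, map_natCast, ZMod.natCast_self, zero_mul]

lemma ff_bb (t : ZMod (p^2)) : ff (bb t) = (p : ZMod (p^2)) * t := by
  have h : bb t = ((t.val : ℕ) : ZMod p) := by rw [← val_cast' t, map_natCast, val_cast']
  rw [h, ff_natCast, val_cast']

lemma bb_p : bb ((p:ℕ) : ZMod (p^2)) = 0 := by rw [map_natCast, ZMod.natCast_self]

lemma ff_eq_zero {t : ZMod p} (h : ff t = 0) : t = 0 := by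
  unfold ff at h
  have h2 : (((p * t.val : ℕ)) : ZMod (p^2)) = 0 := by push_cast; linear_combination h
  rw [ZMod.natCast_eq_zero_iff] at h2
  have hlt : p * t.val < p^2 := by
    have h1 := ZMod.val_lt t
    have := Nat.mul_lt_mul_of_lt_of_le h1 (le_refl p) (NeZero.pos p)
    calc p * t.val = t.val * p := Nat.mul_comm _ _
      _ < p * p := this
      _ = p^2 := (sq p).symm
  have h0 : p * t.val = 0 := Nat.eq_zero_of_dvd_of_lt h2 hlt
  have : t.val = 0 := by
    rcases Nat.mul_eq_zero.mp h0 with h | h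
    · exact absurd h (NeZero.ne p)
    · exact h
  exact (ZMod.val_eq_zero t).mp this


def pmul (u v : MM p) : MM p :=
  ⟨u.c + v.c,
    u.a + v.a + ff ((2:ZMod p)⁻¹ *
      (bb v.c * bb u.a * (1 - bb u.a) - 2 * bb v.a * (bb v.c * bb u.a + u.b))),
    u.b + bb v.c * bb u.a + v.b⟩

def pinv (u : MM p) : MM p :=
  ⟨-u.c,
    -u.a + ff ((2:ZMod p)⁻¹ * (bb u.c * bb u.a * (bb u.a + 1) - 2 * bb u.a * u.b)),
    -u.b + bb u.c * bb u.a⟩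

@[simp] lemma pmul_c (u v : MM p) : (pmul u v).c = u.c + v.c := rfl
@[simp] lemma pmul_a (u v : MM p) : (pmul u v).a = u.a + v.a + ff ((2:ZMod p)⁻¹ *
      (bb v.c * bb u.a * (1 - bb u.a) - 2 * bb v.a * (bb v.c * bb u.a + u.b))) := rfl
@[simp] lemma pmul_b (u v : MM p) : (pmul u v).b = u.b + bb v.c * bb u.a + v.b := rfl
@[simp] lemma pinv_c (u : MM p) : (pinv u).c = -u.c := rfl
@[simp] lemma pinv_a (u : MM p) : (pinv u).a =
    -u.a + ff ((2:ZMod p)⁻¹ * (bb u.c * bb u.a * (bb u.a + 1) - 2 * bb u.a * u.b)) := rfl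
@[simp] lemma pinv_b (u : MM p) : (pinv u).b = -u.b + bb u.c * bb u.a := rfl

lemma ff_shuffle (a1 a2 a3 : ZMod (p^2)) (x1 x2 x3 x4 : ZMod p) (h : x1 + x2 = x3 + x4) :
    a1 + a2 + ff x1 + a3 + ff x2 = a1 + (a2 + a3 + ff x3) + ff x4 := by
  have h2 : ff x1 + ff x2 = ff x3 + ff x4 := by
    rw [← ff_add, ← ff_add, h]
  linear_combination h2

lemma pmul_assoc (u v w : MM p) : pmul (pmul u v) w = pmul u (pmul v w) := by
  ext
  · simp; ring
  · simp only [pmul_a, pmul_b, pmul_c, map_add, map_sub, map_mul, map_one, map_neg, bb_ff]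
    exact ff_shuffle _ _ _ _ _ _ _ (by ring)
  · simp only [pmul_a, pmul_b, pmul_c, map_add, map_sub, map_mul, map_one, map_neg, bb_ff]
    ring

lemma ff_cancel (a : ZMod (p^2)) (x1 x2 : ZMod p) (h : x1 + x2 = 0) :
    -a + ff x1 + a + ff x2 = 0 := by
  have h2 : ff x1 + ff x2 = 0 := by rw [← ff_add, h, ff_zero]
  linear_combination h2

lemma pone_mul (u : MM p) : pmul ⟨0,0,0⟩ u = u := by
  ext <;>
    simp only [pmul_a, pmul_b, pmul_c, map_zero, map_add, map_sub, map_mul, map_neg, bb_ff] <;>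
    simp [ff_zero]

lemma pmul_one (u : MM p) : pmul u ⟨0,0,0⟩ = u := by
  ext <;>
    simp only [pmul_a, pmul_b, pmul_c, map_zero, map_add, map_sub, map_mul, map_neg, bb_ff] <;>
    simp [ff_zero]

lemma pinv_mul (u : MM p) : pmul (pinv u) u = ⟨0,0,0⟩ := by
  ext
  · show -u.c + u.c = 0; ring
  · simp only [pmul_a, pmul_b, pmul_c, pinv_a, pinv_b, pinv_c,
      map_add, map_sub, map_mul, map_one, map_neg, map_zero, bb_ff]
    exact ff_cancel _ _ _ (by ring)
  · simp only [pmul_a, pmul_b, pmul_c, pinv_a, pinv_b, pinv_c,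
      map_add, map_sub, map_mul, map_one, map_neg, map_zero, bb_ff]
    ring

instance : Group (MM p) where
  one := ⟨0,0,0⟩
  mul := pmul
  inv := pinv
  mul_assoc := pmul_assoc
  one_mul := pone_mul
  mul_one := pmul_one
  inv_mul_cancel := pinv_mul

@[simp] lemma mul_c (u v : MM p) : (u * v).c = u.c + v.c := rfl
@[simp] lemma mul_a (u v : MM p) : (u * v).a = u.a + v.a + ff ((2:ZMod p)⁻¹ *
      (bb v.c * bb u.a * (1 - bb u.a) - 2 * bb v.a * (bb v.c * bb u.a + u.b))) := rfl
@[simp] lemma mul_b (u v : MM p) : (u * v).b = u.b + bb v.c * bb u.a + v.b := rfl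
@[simp] lemma one_c : (1 : MM p).c = 0 := rfl
@[simp] lemma one_a : (1 : MM p).a = 0 := rfl
@[simp] lemma one_b : (1 : MM p).b = 0 := rfl
@[simp] lemma inv_c (u : MM p) : (u⁻¹).c = -u.c := rfl
@[simp] lemma inv_a (u : MM p) : (u⁻¹).a =
    -u.a + ff ((2:ZMod p)⁻¹ * (bb u.c * bb u.a * (bb u.a + 1) - 2 * bb u.a * u.b)) := rfl
@[simp] lemma inv_b (u : MM p) : (u⁻¹).b = -u.b + bb u.c * bb u.a := rfl


variable (p)
def xM : MM p := ⟨0,1,0⟩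
def yM : MM p := ⟨0,0,1⟩
def zM : MM p := ⟨1,0,0⟩
def nM : MM p := ⟨-((p:ℕ):ZMod (p^2)), ((p:ℕ):ZMod (p^2)), 0⟩
variable {p}

lemma xM_pow (k : ℕ) : (xM p)^k = ⟨0, ((k:ℕ):ZMod (p^2)), 0⟩ := by
  induction k with
  | zero => ext <;> simp
  | succ n ih =>
    rw [pow_succ, ih]
    ext <;> simp [xM, bb_ff, ff_zero] <;> ring_nf <;> simp [ff_zero] <;> push_cast <;> ring


lemma yM_pow (k : ℕ) : (yM p)^k = ⟨0, 0, ((k:ℕ):ZMod p)⟩ := by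
  induction k with
  | zero => ext <;> simp
  | succ n ih =>
    rw [pow_succ, ih]
    ext <;> simp [yM, bb_ff, ff_zero] <;> push_cast <;> ring

lemma zM_pow (k : ℕ) : (zM p)^k = ⟨((k:ℕ):ZMod (p^2)), 0, 0⟩ := by
  induction k with
  | zero => ext <;> simp
  | succ n ih =>
    rw [pow_succ, ih]
    ext <;> simp [zM, bb_ff, ff_zero] <;> push_cast <;> ring

lemma nM_pow (k : ℕ) : (nM p)^k = ⟨-((k*p:ℕ):ZMod (p^2)), ((k*p:ℕ):ZMod (p^2)), 0⟩ := by
  induction k with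
  | zero => ext <;> simp
  | succ n ih =>
    rw [pow_succ, ih]
    ext <;> simp [nM, bb_ff, ff_zero, bb_p] <;> push_cast <;> ring

lemma xM_pow_psq : (xM p)^(p^2) = 1 := by
  rw [xM_pow]; ext <;> simp [ZMod.natCast_self]

lemma yM_pow_p : (yM p)^p = 1 := by
  rw [yM_pow]; ext <;> simp [ZMod.natCast_self]

lemma zM_pow_psq : (zM p)^(p^2) = 1 := by
  rw [zM_pow]; ext <;> simp [ZMod.natCast_self]

lemma nM_pow_p : (nM p)^p = 1 := by
  rw [nM_pow]; ext <;> simp [← pow_two, ZMod.natCast_self]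

lemma rel5M : (xM p)^p = (zM p)^p * nM p := by
  rw [xM_pow, zM_pow]
  ext <;> simp [nM, bb_ff, ff_zero, bb_p] <;> push_cast <;> ring

lemma rel7M : xM p * zM p = zM p * (xM p * yM p) := by
  ext <;> simp [xM, yM, zM, bb_ff, ff_zero] <;> ring_nf <;> simp [ff_zero]

lemma rel8M : yM p * zM p = zM p * yM p := by
  ext <;> simp [yM, zM, bb_ff, ff_zero]

lemma rel9M : xM p * nM p = nM p * xM p := by
  ext <;> simp [xM, nM, bb_ff, ff_zero, bb_p] <;> ring

lemma rel10M : yM p * nM p = nM p * yM p := by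
  ext <;> simp [yM, nM, bb_ff, ff_zero, bb_p] <;> ring

lemma rel11M : zM p * nM p = nM p * zM p := by
  ext <;> simp [zM, nM, bb_ff, ff_zero, bb_p] <;> ring


lemma two_inv_mul (hp : p.Prime) (hodd : Odd p) [Fact p.Prime] :
    (2:ZMod p)⁻¹ * 2 = 1 := by
  have h2 : (2:ZMod p) ≠ 0 := by
    intro h
    have : ((2:ℕ) : ZMod p) = 0 := by push_cast; exact h
    rw [ZMod.natCast_eq_zero_iff] at this
    have := (Nat.prime_dvd_prime_iff_eq hp Nat.prime_two).mp this
    subst this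
    exact (Nat.not_odd_iff_even.mpr (even_two)) hodd
  exact inv_mul_cancel₀ h2

lemma rel6M (hp : p.Prime) (hodd : Odd p) [Fact p.Prime] :
    xM p * yM p = yM p * (xM p * (xM p)^p) := by
  have h2 := two_inv_mul (p := p) hp hodd
  rw [xM_pow]
  ext <;> simp [xM, yM, bb_ff, ff_zero, bb_p] <;> ring_nf <;> rw [h2] <;>
    simp [ff_neg, ff_one]


variable (p) in
def K1 : Subgroup (MM p) where
  carrier := {u | u.c = 0}
  one_mem' := rfl
  mul_mem' := by
    intro u v hu hv
    simp only [Set.mem_setOf_eq] at *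
    simp [hu, hv]
  inv_mem' := by
    intro u hu
    simp only [Set.mem_setOf_eq] at *
    simp [hu]

variable (p) in
def K2 : Subgroup (MM p) where
  carrier := {u | u.a = 0}
  one_mem' := rfl
  mul_mem' := by
    intro u v hu hv
    simp only [Set.mem_setOf_eq] at *
    simp [hu, hv, ff_zero]
  inv_mem' := by
    intro u hu
    simp only [Set.mem_setOf_eq] at *
    simp [hu, ff_zero]

lemma mem_K1 (u : MM p) : u ∈ K1 p ↔ u.c = 0 := Iff.rfl
lemma mem_K2 (u : MM p) : u ∈ K2 p ↔ u.a = 0 := Iff.rfl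

variable (p) in
def mmEquiv : MM p ≃ (ZMod (p^2)) × (ZMod (p^2)) × ZMod p where
  toFun u := (u.c, u.a, u.b)
  invFun t := ⟨t.1, t.2.1, t.2.2⟩
  left_inv u := rfl
  right_inv t := rfl

instance : Finite (MM p) := Finite.of_equiv _ (mmEquiv p).symm

lemma card_MM : Nat.card (MM p) = p^5 := by
  rw [Nat.card_congr (mmEquiv p)]
  simp [Nat.card_prod, Nat.card_zmod]
  ring

variable (p) in
def k1Equiv : (K1 p) ≃ (ZMod (p^2)) × ZMod p where
  toFun u := (u.1.a, u.1.b)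
  invFun t := ⟨⟨0, t.1, t.2⟩, rfl⟩
  left_inv u := by
    ext
    · exact u.2.symm
    · rfl
    · rfl
  right_inv t := rfl

variable (p) in
def k2Equiv : (K2 p) ≃ (ZMod (p^2)) × ZMod p where
  toFun u := (u.1.c, u.1.b)
  invFun t := ⟨⟨t.1, 0, t.2⟩, rfl⟩
  left_inv u := by
    ext
    · rfl
    · exact u.2.symm
    · rfl
  right_inv t := rfl

lemma card_K1 : Nat.card (K1 p) = p^3 := by
  rw [Nat.card_congr (k1Equiv p)]
  simp [Nat.card_prod, Nat.card_zmod]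
  ring

lemma card_K2 : Nat.card (K2 p) = p^3 := by
  rw [Nat.card_congr (k2Equiv p)]
  simp [Nat.card_prod, Nat.card_zmod]
  ring

lemma index_K1 (hp : p.Prime) : (K1 p).index = p^2 := by
  have h := Subgroup.card_mul_index (K1 p)
  rw [card_K1, card_MM] at h
  have hpos : p^3 ≠ 0 := pow_ne_zero 3 hp.ne_zero
  have : p^3 * (K1 p).index = p^3 * p^2 := by rw [h]; ring
  exact Nat.eq_of_mul_eq_mul_left (Nat.pos_of_ne_zero hpos) this

lemma index_K2 (hp : p.Prime) : (K2 p).index = p^2 := by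
  have h := Subgroup.card_mul_index (K2 p)
  rw [card_K2, card_MM] at h
  have hpos : p^3 ≠ 0 := pow_ne_zero 3 hp.ne_zero
  have : p^3 * (K2 p).index = p^3 * p^2 := by rw [h]; ring
  exact Nat.eq_of_mul_eq_mul_left (Nat.pos_of_ne_zero hpos) this

lemma core_key (hp : p.Prime) (hodd : Odd p) [Fact p.Prime] (u : MM p)
    (h1 : u.c = 0) (h2 : u.a = 0) (h3 : (xM p * u * (xM p)⁻¹).a = 0) : u = 1 := by
  have hh := two_inv_mul (p := p) hp hodd
  simp [xM, h1, h2, bb_ff, ff_zero] at h3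
  ring_nf at h3
  rw [show (2:ZMod p)⁻¹ * u.b * 2 = u.b * (2⁻¹ * 2) from by ring, hh, mul_one] at h3
  have hb := ff_eq_zero h3
  ext
  · simpa using h1
  · simpa using h2
  · simpa using hb

end MM

section Helpers
variable {G : Type*} [Group G] {a b c : G}

lemma of_rel_aux (h : a⁻¹*b⁻¹*a*b*c⁻¹ = 1) : a*b = b*(a*c) := by
  have h1 : a⁻¹*b⁻¹*a*b = c := by
    rw [← mul_inv_eq_one]; simpa [mul_assoc] using h
  rw [← h1]; group

lemma of_rel_comm (h : a⁻¹*b⁻¹*a*b = 1) : a*b = b*a := by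
  have := of_rel_aux (a := a) (b := b) (c := (1:G)) (by rw [inv_one, mul_one]; exact h)
  simpa using this

lemma rel_of_aux (h : a*b = b*(a*c)) : a⁻¹*b⁻¹*a*b*c⁻¹ = 1 := by
  rw [mul_assoc (a⁻¹*b⁻¹) a b, h]; group

lemma rel_of_comm (h : a*b = b*a) : a⁻¹*b⁻¹*a*b = 1 := by
  rw [mul_assoc (a⁻¹*b⁻¹) a b, h]; group

end Helpers

section E2side
open MM

variable (p : ℕ)

def π : FreeGroup (Fin 4) →* E2 p := QuotientGroup.mk' _

variable {p}

lemma π_rel {r : FreeGroup (Fin 4)} (hr : r ∈ E2defs.rels p) : π p r = 1 := by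
  exact (QuotientGroup.eq_one_iff r).mpr (Subgroup.subset_normalClosure hr)

lemma π_of (i : Fin 4) : π p (FreeGroup.of i) = PresentedGroup.of i := rfl

lemma relE1 : (xE p)^(p^2) = 1 := by
  have := π_rel (p := p) (r := E2defs.x ^ (p^2)) (by simp [E2defs.rels])
  simpa [map_pow, π_of, xE] using this

lemma relE2 : (yE p)^p = 1 := by
  have := π_rel (p := p) (r := E2defs.y ^ p) (by simp [E2defs.rels])
  simpa [map_pow, π_of, yE] using this

lemma relE3 : (zE p)^(p^2) = 1 := by
  have := π_rel (p := p) (r := E2defs.z ^ (p^2)) (by simp [E2defs.rels])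
  simpa [map_pow, π_of, zE] using this

lemma relE4 : (nE p)^p = 1 := by
  have := π_rel (p := p) (r := E2defs.n ^ p) (by simp [E2defs.rels])
  simpa [map_pow, π_of, nE] using this

lemma relE5 : (xE p)^p = (zE p)^p * nE p := by
  have := π_rel (p := p) (r := E2defs.x ^ p * (E2defs.z ^ p * E2defs.n)⁻¹)
    (by simp [E2defs.rels])
  rw [map_mul, map_inv, map_mul, map_pow, map_pow] at this
  rw [← mul_inv_eq_one]
  simpa [π_of, xE, zE, nE] using this

lemma relE6 : xE p * yE p = yE p * (xE p * (xE p)^p) := by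
  have := π_rel (p := p) (r := comm' E2defs.x E2defs.y * (E2defs.x ^ p)⁻¹)
    (by simp [E2defs.rels])
  rw [comm'] at this
  simp only [map_mul, map_inv, map_pow, π_of] at this
  exact of_rel_aux this

lemma relE7 : xE p * zE p = zE p * (xE p * yE p) := by
  have := π_rel (p := p) (r := comm' E2defs.x E2defs.z * E2defs.y⁻¹)
    (by simp [E2defs.rels])
  rw [comm'] at this
  simp only [map_mul, map_inv, map_pow, π_of] at this
  exact of_rel_aux this

lemma relE8 : yE p * zE p = zE p * yE p := by
  have := π_rel (p := p) (r := comm' E2defs.y E2defs.z) (by simp [E2defs.rels])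
  rw [comm'] at this
  simp only [map_mul, map_inv, π_of] at this
  exact of_rel_comm this

lemma relE9 : xE p * nE p = nE p * xE p := by
  have := π_rel (p := p) (r := comm' E2defs.x E2defs.n) (by simp [E2defs.rels])
  rw [comm'] at this
  simp only [map_mul, map_inv, π_of] at this
  exact of_rel_comm this

lemma relE10 : yE p * nE p = nE p * yE p := by
  have := π_rel (p := p) (r := comm' E2defs.y E2defs.n) (by simp [E2defs.rels])
  rw [comm'] at this
  simp only [map_mul, map_inv, π_of] at this
  exact of_rel_comm this

lemma relE11 : zE p * nE p = nE p * zE p := by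
  have := π_rel (p := p) (r := comm' E2defs.z E2defs.n) (by simp [E2defs.rels])
  rw [comm'] at this
  simp only [map_mul, map_inv, π_of] at this
  exact of_rel_comm this


end E2side

section Facts
variable {p : ℕ}

lemma commute_of_conj {G : Type*} [Group G] {g a : G} (h : g⁻¹ * a * g = a) :
    Commute a g := by
  have : a * g = g * a := by
    calc a * g = g * (g⁻¹ * a * g) := by group
    _ = g * a := by rw [h]
  exact this

lemma conjY : (yE p)⁻¹ * xE p * yE p = xE p * (xE p)^p := by
  rw [mul_assoc, relE6, ← mul_assoc, inv_mul_cancel, one_mul]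

lemma conjZ : (zE p)⁻¹ * xE p * zE p = xE p * yE p := by
  rw [mul_assoc, relE7, ← mul_assoc, inv_mul_cancel, one_mul]

lemma commXpY : Commute ((xE p)^p) (yE p) := by
  apply commute_of_conj
  have h1 : ((yE p)⁻¹ * xE p * yE p)^p = (yE p)⁻¹ * (xE p)^p * yE p := by
    have := conj_pow (a := (yE p)⁻¹) (b := xE p) (i := p)
    simpa [inv_inv] using this
  rw [conjY] at h1
  have hcom : Commute (xE p) ((xE p)^p) := (Commute.refl (xE p)).pow_right p
  rw [hcom.mul_pow, ← pow_mul] at h1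
  have h2 : (xE p)^(p*p) = 1 := by
    rw [show p*p = p^2 from (sq p).symm]; exact relE1
  rw [h2, mul_one] at h1
  exact h1.symm


lemma YrelX : yE p * xE p = xE p * yE p * ((xE p)^p)⁻¹ := by
  have h : xE p * yE p = yE p * (xE p * (xE p)^p) := relE6
  rw [h]; group

lemma YinvX : (yE p)⁻¹ * xE p = xE p * (yE p)⁻¹ * (xE p)^p := by
  have h := conjY (p := p)
  have h2 : (yE p)⁻¹ * xE p = xE p * (xE p)^p * (yE p)⁻¹ := by
    rw [← h]; group
  rw [h2]
  have hc : (xE p)^p * (yE p)⁻¹ = (yE p)⁻¹ * (xE p)^p := (commXpY.inv_right).eq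
  rw [mul_assoc, hc]; group

lemma XcYb : ∀ b : ℤ, (yE p)^(-b) * xE p * (yE p)^b = xE p * ((xE p)^p)^b := by
  intro b
  induction b using Int.induction_on with
  | zero => simp
  | succ k ih =>
    have hY : ((xE p)^p)^(k:ℤ) * (yE p) = yE p * ((xE p)^p)^(k:ℤ) :=
      (commXpY.zpow_left (k:ℤ)).eq
    have expand : (yE p)^(-((k:ℤ)+1)) * xE p * (yE p)^((k:ℤ)+1)
        = (yE p)⁻¹ * ((yE p)^(-(k:ℤ)) * xE p * (yE p)^(k:ℤ)) * yE p := by group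
    rw [expand, ih, mul_assoc ((yE p)⁻¹), mul_assoc (xE p), hY, ← mul_assoc, ← mul_assoc,
      conjY]
    group
  | pred k ih =>
    have hY : (((xE p)^p)^(-(k:ℤ)) * (yE p)⁻¹) = (yE p)⁻¹ * ((xE p)^p)^(-(k:ℤ)) :=
      ((commXpY.zpow_left (-(k:ℤ))).inv_right).eq
    have expand : (yE p)^(-(-(k:ℤ)-1)) * xE p * (yE p)^(-(k:ℤ)-1)
        = yE p * ((yE p)^(-(-(k:ℤ))) * xE p * (yE p)^(-(k:ℤ))) * (yE p)⁻¹ := by group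
    rw [expand, ih, mul_assoc (yE p), mul_assoc (xE p), hY, ← mul_assoc, ← mul_assoc]
    have hyxy : yE p * xE p * (yE p)⁻¹ = xE p * ((xE p)^p)⁻¹ := by
      rw [YrelX]
      have hc : ((xE p)^p)⁻¹ * (yE p)⁻¹ = (yE p)⁻¹ * ((xE p)^p)⁻¹ :=
        (commXpY.inv_left.inv_right).eq
      calc xE p * yE p * ((xE p)^p)⁻¹ * (yE p)⁻¹ = xE p * yE p * (((xE p)^p)⁻¹ * (yE p)⁻¹) := by
            group
      _ = xE p * yE p * ((yE p)⁻¹ * ((xE p)^p)⁻¹) := by rw [hc]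
      _ = xE p * ((xE p)^p)⁻¹ := by group
    rw [hyxy]
    group

lemma XaYb (a b : ℤ) : (xE p)^a * (yE p)^b = (yE p)^b * ((xE p)^a * ((xE p)^p)^(a*b)) := by
  have h1 : ((yE p)^b)⁻¹ * (xE p)^a * (yE p)^b = (xE p * ((xE p)^p)^b)^a := by
    have hc : ((yE p)^(-b) * xE p * ((yE p)^(-b))⁻¹)^a
        = (yE p)^(-b) * (xE p)^a * ((yE p)^(-b))⁻¹ := conj_zpow
    simp only [zpow_neg, inv_inv] at hc
    rw [← hc]
    congr 1
    have := XcYb (p := p) b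
    simpa [zpow_neg] using this
  have h2 : (xE p * ((xE p)^p)^b)^a = (xE p)^a * ((xE p)^p)^(a*b) := by
    have hcom : Commute (xE p) (((xE p)^p)^b) :=
      ((Commute.refl (xE p)).pow_right p).zpow_right b
    rw [hcom.mul_zpow, ← zpow_mul]
    ring_nf
  have h3 := h1.trans h2
  calc (xE p)^a * (yE p)^b = (yE p)^b * (((yE p)^b)⁻¹ * (xE p)^a * (yE p)^b) := by group
  _ = (yE p)^b * ((xE p)^a * ((xE p)^p)^(a*b)) := by rw [h3]

lemma YXa (a : ℤ) : yE p * (xE p)^a = (xE p)^a * (yE p * (((xE p)^p)^a)⁻¹) := by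
  have h := XaYb (p := p) a 1
  simp only [zpow_one] at h
  symm
  calc (xE p)^a * (yE p * (((xE p)^p)^a)⁻¹)
      = ((xE p)^a * yE p) * (((xE p)^p)^a)⁻¹ := by group
  _ = (yE p * ((xE p)^a * ((xE p)^p)^(a*1))) * (((xE p)^p)^a)⁻¹ := by rw [h]
  _ = yE p * (xE p)^a := by rw [mul_one a]; group



section Generic
variable {G : Type*} [Group G] (x y z c : G)

lemma gen_powXY (hyx : y * x = x * y * c⁻¹) (hcx : Commute c x) (hcy : Commute c y) :
    ∀ k : ℕ, (x*y)^k = x^k * y^k * (c^(k.choose 2))⁻¹ := by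
  have hynx : ∀ n : ℕ, y^n * x = x * y^n * (c^n)⁻¹ := by
    intro n
    induction n with
    | zero => simp
    | succ m ih =>
      calc y^(m+1) * x = y^m * (y * x) := by rw [pow_succ]; group
      _ = y^m * (x * y * c⁻¹) := by rw [hyx]
      _ = (y^m * x) * y * c⁻¹ := by group
      _ = (x * y^m * (c^m)⁻¹) * y * c⁻¹ := by rw [ih]
      _ = x * y^m * ((c^m)⁻¹ * y) * c⁻¹ := by group
      _ = x * y^m * (y * (c^m)⁻¹) * c⁻¹ := by rw [((hcy.pow_left m).inv_left).eq]
      _ = x * y^(m+1) * (c^(m+1))⁻¹ := by rw [pow_succ, pow_succ]; group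
  intro k
  induction k with
  | zero => simp
  | succ n ih =>
    have hchoose : (n+1).choose 2 = n.choose 2 + n := by
      rw [Nat.choose_succ_succ, Nat.choose_one_right, Nat.add_comm]
    calc (x*y)^(n+1) = (x*y)^n * (x*y) := pow_succ _ _
    _ = x^n * y^n * (c^(n.choose 2))⁻¹ * (x*y) := by rw [ih]
    _ = x^n * y^n * ((c^(n.choose 2))⁻¹ * x) * y := by group
    _ = x^n * y^n * (x * (c^(n.choose 2))⁻¹) * y := by
        rw [((hcx.pow_left (n.choose 2)).inv_left).eq]
    _ = x^n * (y^n * x) * ((c^(n.choose 2))⁻¹ * y) := by group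
    _ = x^n * (x * y^n * (c^n)⁻¹) * ((c^(n.choose 2))⁻¹ * y) := by rw [hynx n]
    _ = x^n * (x * y^n * (c^n)⁻¹) * (y * (c^(n.choose 2))⁻¹) := by
        rw [((hcy.pow_left (n.choose 2)).inv_left).eq]
    _ = x^(n+1) * y^n * ((c^n)⁻¹ * y) * (c^(n.choose 2))⁻¹ := by group
    _ = x^(n+1) * y^n * (y * (c^n)⁻¹) * (c^(n.choose 2))⁻¹ := by
        rw [((hcy.pow_left n).inv_left).eq]
    _ = x^(n+1) * y^(n+1) * ((c^n)⁻¹ * (c^(n.choose 2))⁻¹) := by group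
    _ = x^(n+1) * y^(n+1) * (c^((n+1).choose 2))⁻¹ := by rw [hchoose]; group

lemma gen_XaZ (h7 : x * z = z * x * y)
    (hxinvz : x⁻¹ * z = z * y⁻¹ * x⁻¹)
    (hyxa : ∀ a : ℤ, y * x^a = x^a * y * (c^a)⁻¹)
    (hyixa : ∀ a : ℤ, y⁻¹ * x^a = x^a * y⁻¹ * c^a)
    (hcy : Commute c y) :
    ∀ a : ℤ, ∃ m : ℤ, x^a * z = z * x^a * y^a * c^m := by
  intro a
  induction a using Int.induction_on with
  | zero => exact ⟨0, by simp⟩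
  | succ k ih =>
    obtain ⟨m, ih⟩ := ih
    refine ⟨m - k, ?_⟩
    have hcyk : (c^(k:ℤ))⁻¹ * y^(k:ℤ) = y^(k:ℤ) * (c^(k:ℤ))⁻¹ :=
      (((hcy.zpow_left (k:ℤ)).zpow_right (k:ℤ)).inv_left).eq
    calc x^((k:ℤ)+1) * z = x * (x^(k:ℤ) * z) := by group
    _ = x * (z * x^(k:ℤ) * y^(k:ℤ) * c^m) := by rw [ih]
    _ = (x * z) * (x^(k:ℤ) * y^(k:ℤ) * c^m) := by group
    _ = (z * x * y) * (x^(k:ℤ) * y^(k:ℤ) * c^m) := by rw [h7]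
    _ = z * x * (y * x^(k:ℤ)) * (y^(k:ℤ) * c^m) := by group
    _ = z * x * (x^(k:ℤ) * y * (c^(k:ℤ))⁻¹) * (y^(k:ℤ) * c^m) := by rw [hyxa k]
    _ = z * x^((k:ℤ)+1) * y * ((c^(k:ℤ))⁻¹ * y^(k:ℤ)) * c^m := by group
    _ = z * x^((k:ℤ)+1) * y * (y^(k:ℤ) * (c^(k:ℤ))⁻¹) * c^m := by rw [hcyk]
    _ = z * x^((k:ℤ)+1) * y^((k:ℤ)+1) * c^(m - k) := by group
  | pred k ih =>
    obtain ⟨m, ih⟩ := ih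
    refine ⟨m - k - 1, ?_⟩
    calc x^(-(k:ℤ)-1) * z = x⁻¹ * (x^(-(k:ℤ)) * z) := by group
    _ = x⁻¹ * (z * x^(-(k:ℤ)) * y^(-(k:ℤ)) * c^m) := by rw [ih]
    _ = (x⁻¹ * z) * (x^(-(k:ℤ)) * y^(-(k:ℤ)) * c^m) := by group
    _ = (z * y⁻¹ * x⁻¹) * (x^(-(k:ℤ)) * y^(-(k:ℤ)) * c^m) := by rw [hxinvz]
    _ = z * (y⁻¹ * x^(-(k:ℤ)-1)) * (y^(-(k:ℤ)) * c^m) := by group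
    _ = z * (x^(-(k:ℤ)-1) * y⁻¹ * c^(-(k:ℤ)-1)) * (y^(-(k:ℤ)) * c^m) := by rw [hyixa (-(k:ℤ)-1)]
    _ = z * x^(-(k:ℤ)-1) * y⁻¹ * (c^(-(k:ℤ)-1) * y^(-(k:ℤ))) * c^m := by group
    _ = z * x^(-(k:ℤ)-1) * y⁻¹ * (y^(-(k:ℤ)) * c^(-(k:ℤ)-1)) * c^m := by
        rw [((hcy.zpow_left (-(k:ℤ)-1)).zpow_right (-(k:ℤ))).eq]
    _ = z * x^(-(k:ℤ)-1) * y^(-(k:ℤ)-1) * c^(m-k-1) := by group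

lemma gen_XaZi (hxzi : x * z⁻¹ = z⁻¹ * x * y⁻¹)
    (hxinvzi : x⁻¹ * z⁻¹ = z⁻¹ * y * x⁻¹)
    (hyxa : ∀ a : ℤ, y * x^a = x^a * y * (c^a)⁻¹)
    (hyixa : ∀ a : ℤ, y⁻¹ * x^a = x^a * y⁻¹ * c^a)
    (hcy : Commute c y) :
    ∀ a : ℤ, ∃ m : ℤ, x^a * z⁻¹ = z⁻¹ * x^a * y^(-a) * c^m := by
  intro a
  induction a using Int.induction_on with
  | zero => exact ⟨0, by simp⟩
  | succ k ih =>
    obtain ⟨m, ih⟩ := ih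
    refine ⟨m + k, ?_⟩
    calc x^((k:ℤ)+1) * z⁻¹ = x * (x^(k:ℤ) * z⁻¹) := by group
    _ = x * (z⁻¹ * x^(k:ℤ) * y^(-(k:ℤ)) * c^m) := by rw [ih]
    _ = (x * z⁻¹) * (x^(k:ℤ) * y^(-(k:ℤ)) * c^m) := by group
    _ = (z⁻¹ * x * y⁻¹) * (x^(k:ℤ) * y^(-(k:ℤ)) * c^m) := by rw [hxzi]
    _ = z⁻¹ * x * (y⁻¹ * x^(k:ℤ)) * (y^(-(k:ℤ)) * c^m) := by group
    _ = z⁻¹ * x * (x^(k:ℤ) * y⁻¹ * c^(k:ℤ)) * (y^(-(k:ℤ)) * c^m) := by rw [hyixa (k:ℤ)]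
    _ = z⁻¹ * x^((k:ℤ)+1) * y⁻¹ * (c^(k:ℤ) * y^(-(k:ℤ))) * c^m := by group
    _ = z⁻¹ * x^((k:ℤ)+1) * y⁻¹ * (y^(-(k:ℤ)) * c^(k:ℤ)) * c^m := by
        rw [((hcy.zpow_left (k:ℤ)).zpow_right (-(k:ℤ))).eq]
    _ = z⁻¹ * x^((k:ℤ)+1) * y^(-((k:ℤ)+1)) * c^(m+k) := by group
  | pred k ih =>
    obtain ⟨m, ih⟩ := ih
    refine ⟨m + k + 1, ?_⟩
    calc x^(-(k:ℤ)-1) * z⁻¹ = x⁻¹ * (x^(-(k:ℤ)) * z⁻¹) := by group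
    _ = x⁻¹ * (z⁻¹ * x^(-(k:ℤ)) * y^(-(-(k:ℤ))) * c^m) := by rw [ih]
    _ = (x⁻¹ * z⁻¹) * (x^(-(k:ℤ)) * y^((k:ℤ)) * c^m) := by group
    _ = (z⁻¹ * y * x⁻¹) * (x^(-(k:ℤ)) * y^((k:ℤ)) * c^m) := by rw [hxinvzi]
    _ = z⁻¹ * (y * x^(-(k:ℤ)-1)) * (y^((k:ℤ)) * c^m) := by group
    _ = z⁻¹ * (x^(-(k:ℤ)-1) * y * (c^(-(k:ℤ)-1))⁻¹) * (y^((k:ℤ)) * c^m) := by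
        rw [hyxa (-(k:ℤ)-1)]
    _ = z⁻¹ * x^(-(k:ℤ)-1) * y * ((c^(-(k:ℤ)-1))⁻¹ * y^((k:ℤ))) * c^m := by group
    _ = z⁻¹ * x^(-(k:ℤ)-1) * y * (y^((k:ℤ)) * (c^(-(k:ℤ)-1))⁻¹) * c^m := by
        rw [(((hcy.zpow_left (-(k:ℤ)-1)).zpow_right ((k:ℤ))).inv_left).eq]
    _ = z⁻¹ * x^(-(k:ℤ)-1) * y^(-(-(k:ℤ)-1)) * c^(m+k+1) := by group

end Generic


lemma hXYp (hodd : Odd p) : (xE p * yE p)^p = (xE p)^p := by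
  have h := gen_powXY (xE p) (yE p) ((xE p)^p) YrelX
    ((Commute.refl (xE p)).pow_left p) commXpY p
  have hev : 2 ∣ (p - 1) := (Nat.Odd.sub_odd hodd odd_one).two_dvd
  have hch : p.choose 2 = p * ((p-1)/2) := by
    rw [Nat.choose_two_right, Nat.mul_div_assoc p hev]
  have hc1 : ((xE p)^p)^(p.choose 2) = 1 := by
    rw [hch, ← pow_mul, show p * (p * ((p-1)/2)) = p^2 * ((p-1)/2) from by ring, pow_mul,
      relE1, one_pow]
  rw [h, relE2, hc1]
  simp

lemma commXpZ (hodd : Odd p) : Commute ((xE p)^p) (zE p) := by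
  apply commute_of_conj
  have h1 : ((zE p)⁻¹ * xE p * zE p)^p = (zE p)⁻¹ * (xE p)^p * zE p := by
    have := conj_pow (a := (zE p)⁻¹) (b := xE p) (i := p)
    simpa [inv_inv] using this
  rw [conjZ, hXYp hodd] at h1
  exact h1.symm

lemma commAll {g : E2 p} (h : ∀ i : Fin 4, Commute g (PresentedGroup.of i)) (w : E2 p) :
    Commute g w := by
  have hw : w ∈ (⊤ : Subgroup (E2 p)) := trivial
  rw [← PresentedGroup.closure_range_of (E2defs.rels p)] at hw
  induction hw using Subgroup.closure_induction with
  | mem x hx => obtain ⟨i, rfl⟩ := hx; exact h i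
  | one => exact Commute.one_right g
  | mul x y hx hy ihx ihy => exact ihx.mul_right ihy
  | inv x hx ih => exact ih.inv_right

lemma Xp_central (hodd : Odd p) (w : E2 p) : Commute ((xE p)^p) w := by
  refine commAll (fun i => ?_) w
  fin_cases i
  · exact (Commute.refl (xE p)).pow_left p
  · exact commXpY
  · exact commXpZ hodd
  · exact (show Commute (xE p) (nE p) from relE9).pow_left p

lemma N_central (w : E2 p) : Commute (nE p) w := by
  refine commAll (fun i => ?_) w
  fin_cases i
  · exact (show Commute (xE p) (nE p) from relE9).symm
  · exact (show Commute (yE p) (nE p) from relE10).symm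
  · exact (show Commute (zE p) (nE p) from relE11).symm
  · exact Commute.refl _

lemma YXa' (a : ℤ) : yE p * (xE p)^a = (xE p)^a * yE p * (((xE p)^p)^a)⁻¹ := by
  rw [YXa]; group

lemma XaY (a : ℤ) : (xE p)^a * yE p = yE p * ((xE p)^a * ((xE p)^p)^a) := by
  have h := XaYb (p := p) a 1
  simpa using h

lemma XaYinv (a : ℤ) : (xE p)^a * (yE p)⁻¹ = (yE p)⁻¹ * ((xE p)^a * (((xE p)^p)^a)⁻¹) := by
  have h := XaYb (p := p) a (-1)
  simp only [zpow_neg_one] at h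
  rw [h]
  rw [show ((xE p)^p)^(a * (-1:ℤ)) = (((xE p)^p)^a)⁻¹ from by group]

lemma YinvXa (a : ℤ) : (yE p)⁻¹ * (xE p)^a = (xE p)^a * (yE p)⁻¹ * ((xE p)^p)^a := by
  have h := XaYinv (p := p) a
  calc (yE p)⁻¹ * (xE p)^a
      = ((yE p)⁻¹ * ((xE p)^a * (((xE p)^p)^a)⁻¹)) * ((xE p)^p)^a := by group
  _ = ((xE p)^a * (yE p)⁻¹) * ((xE p)^p)^a := by rw [← h]
  _ = (xE p)^a * (yE p)⁻¹ * ((xE p)^p)^a := by group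

lemma XinvZ : (xE p)⁻¹ * zE p = zE p * (yE p)⁻¹ * (xE p)⁻¹ := by
  have h : xE p * (zE p * (yE p)⁻¹ * (xE p)⁻¹) = zE p := by
    calc xE p * (zE p * (yE p)⁻¹ * (xE p)⁻¹)
        = (xE p * zE p) * ((yE p)⁻¹ * (xE p)⁻¹) := by group
    _ = (zE p * (xE p * yE p)) * ((yE p)⁻¹ * (xE p)⁻¹) := by rw [relE7]
    _ = zE p := by group
  calc (xE p)⁻¹ * zE p = (xE p)⁻¹ * (xE p * (zE p * (yE p)⁻¹ * (xE p)⁻¹)) := by rw [h]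
  _ = zE p * (yE p)⁻¹ * (xE p)⁻¹ := by group

lemma ZXZi : zE p * xE p * (zE p)⁻¹ = xE p * (yE p)⁻¹ := by
  have h8 : zE p * yE p * (zE p)⁻¹ = yE p := by
    rw [← relE8]; group
  have hx : xE p = (zE p * xE p * (zE p)⁻¹) * yE p := by
    calc xE p = zE p * ((zE p)⁻¹ * xE p * zE p) * (zE p)⁻¹ := by group
    _ = zE p * (xE p * yE p) * (zE p)⁻¹ := by rw [conjZ]
    _ = (zE p * xE p * (zE p)⁻¹) * (zE p * yE p * (zE p)⁻¹) := by group
    _ = (zE p * xE p * (zE p)⁻¹) * yE p := by rw [h8]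
  calc zE p * xE p * (zE p)⁻¹
      = ((zE p * xE p * (zE p)⁻¹) * yE p) * (yE p)⁻¹ := by group
  _ = xE p * (yE p)⁻¹ := by rw [← hx]

lemma XZinv : xE p * (zE p)⁻¹ = (zE p)⁻¹ * xE p * (yE p)⁻¹ := by
  calc xE p * (zE p)⁻¹ = (zE p)⁻¹ * (zE p * xE p * (zE p)⁻¹) := by group
  _ = (zE p)⁻¹ * (xE p * (yE p)⁻¹) := by rw [ZXZi]
  _ = (zE p)⁻¹ * xE p * (yE p)⁻¹ := by group

lemma XinvZinv : (xE p)⁻¹ * (zE p)⁻¹ = (zE p)⁻¹ * yE p * (xE p)⁻¹ := by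
  have h : zE p * (xE p)⁻¹ * (zE p)⁻¹ = yE p * (xE p)⁻¹ := by
    calc zE p * (xE p)⁻¹ * (zE p)⁻¹ = (zE p * xE p * (zE p)⁻¹)⁻¹ := by group
    _ = (xE p * (yE p)⁻¹)⁻¹ := by rw [ZXZi]
    _ = yE p * (xE p)⁻¹ := by group
  calc (xE p)⁻¹ * (zE p)⁻¹ = (zE p)⁻¹ * (zE p * (xE p)⁻¹ * (zE p)⁻¹) := by group
  _ = (zE p)⁻¹ * (yE p * (xE p)⁻¹) := by rw [h]
  _ = (zE p)⁻¹ * yE p * (xE p)⁻¹ := by group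

lemma XaZ (a : ℤ) :
    ∃ m : ℤ, (xE p)^a * zE p = zE p * (xE p)^a * (yE p)^a * ((xE p)^p)^m :=
  gen_XaZ (xE p) (yE p) (zE p) ((xE p)^p)
    (by rw [relE7]; group) XinvZ YXa' YinvXa commXpY a

lemma XaZi (a : ℤ) :
    ∃ m : ℤ, (xE p)^a * (zE p)⁻¹ = (zE p)⁻¹ * (xE p)^a * (yE p)^(-a) * ((xE p)^p)^m :=
  gen_XaZi (xE p) (yE p) (zE p) ((xE p)^p)
    XZinv XinvZinv YXa' YinvXa commXpY a

lemma NvalNat : nE p = ((zE p)^p)⁻¹ * (xE p)^p := by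
  rw [relE5]; group

lemma of_eq : (PresentedGroup.of : Fin 4 → E2 p) = ![xE p, yE p, zE p, nE p] := by
  funext i
  fin_cases i <;> rfl


lemma normal_form (hodd : Odd p) (g : E2 p) :
    ∃ cc bb aa : ℤ, g = (zE p)^cc * (yE p)^bb * (xE p)^aa := by
  have hg : g ∈ (⊤ : Subgroup (E2 p)) := trivial
  rw [← PresentedGroup.closure_range_of (E2defs.rels p)] at hg
  induction hg using Subgroup.closure_induction_right with
  | one => exact ⟨0, 0, 0, by simp⟩
  | mul_right w hw t ht ih =>
    obtain ⟨i, rfl⟩ := ht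
    obtain ⟨cc, bb, aa, rfl⟩ := ih
    fin_cases i
    · exact ⟨cc, bb, aa + 1, by
        show (zE p)^cc * (yE p)^bb * (xE p)^aa * xE p = (zE p)^cc * (yE p)^(bb) * (xE p)^(aa+1)
        group⟩
    · refine ⟨cc, bb + 1, aa + p * aa, ?_⟩
      show (zE p)^cc * (yE p)^bb * (xE p)^aa * yE p
        = (zE p)^cc * (yE p)^(bb+1) * (xE p)^(aa + p * aa)
      calc (zE p)^cc * (yE p)^bb * (xE p)^aa * yE p
          = (zE p)^cc * (yE p)^bb * ((xE p)^aa * yE p) := by group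
      _ = (zE p)^cc * (yE p)^bb * (yE p * ((xE p)^aa * ((xE p)^p)^aa)) := by rw [XaY]
      _ = (zE p)^cc * (yE p)^(bb+1) * (xE p)^(aa + p * aa) := by group
    · obtain ⟨m, hm⟩ := XaZ (p := p) aa
      refine ⟨cc + 1, bb + aa, aa + p * (aa * aa + m), ?_⟩
      have hYZ : (yE p)^bb * zE p = zE p * (yE p)^bb :=
        ((show Commute (yE p) (zE p) from relE8).zpow_left bb).eq
      show (zE p)^cc * (yE p)^bb * (xE p)^aa * zE p
        = (zE p)^(cc+1) * (yE p)^(bb+aa) * (xE p)^(aa + p * (aa * aa + m))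
      calc (zE p)^cc * (yE p)^bb * (xE p)^aa * zE p
          = (zE p)^cc * (yE p)^bb * ((xE p)^aa * zE p) := by group
      _ = (zE p)^cc * (yE p)^bb * (zE p * (xE p)^aa * (yE p)^aa * ((xE p)^p)^m) := by rw [hm]
      _ = (zE p)^cc * ((yE p)^bb * zE p) * ((xE p)^aa * (yE p)^aa) * ((xE p)^p)^m := by group
      _ = (zE p)^cc * (zE p * (yE p)^bb) * ((xE p)^aa * (yE p)^aa) * ((xE p)^p)^m := by rw [hYZ]
      _ = (zE p)^cc * (zE p * (yE p)^bb) * ((yE p)^aa * ((xE p)^aa * ((xE p)^p)^(aa*aa)))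
            * ((xE p)^p)^m := by rw [XaYb]
      _ = (zE p)^(cc+1) * (yE p)^(bb+aa) * (xE p)^(aa + p * (aa * aa + m)) := by group
    · refine ⟨cc - p, bb, aa + p, ?_⟩
      show (zE p)^cc * (yE p)^bb * (xE p)^aa * nE p
        = (zE p)^(cc - p) * (yE p)^bb * (xE p)^(aa + p)
      calc (zE p)^cc * (yE p)^bb * (xE p)^aa * nE p
          = nE p * ((zE p)^cc * (yE p)^bb * (xE p)^aa) :=
            (N_central ((zE p)^cc * (yE p)^bb * (xE p)^aa)).symm.eq
      _ = ((zE p)^p)⁻¹ * ((xE p)^p * ((zE p)^cc * (yE p)^bb)) * (xE p)^aa := by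
            rw [NvalNat]; group
      _ = ((zE p)^p)⁻¹ * (((zE p)^cc * (yE p)^bb) * (xE p)^p) * (xE p)^aa := by
            rw [(Xp_central hodd ((zE p)^cc * (yE p)^bb)).eq]
      _ = (zE p)^(cc - p) * (yE p)^bb * (xE p)^(aa + p) := by group
  | mul_inv_cancel w hw t ht ih =>
    obtain ⟨i, rfl⟩ := ht
    obtain ⟨cc, bb, aa, rfl⟩ := ih
    fin_cases i
    · exact ⟨cc, bb, aa - 1, by
        show (zE p)^cc * (yE p)^bb * (xE p)^aa * (xE p)⁻¹
          = (zE p)^cc * (yE p)^(bb) * (xE p)^(aa-1)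
        group⟩
    · refine ⟨cc, bb - 1, aa - p * aa, ?_⟩
      show (zE p)^cc * (yE p)^bb * (xE p)^aa * (yE p)⁻¹
        = (zE p)^cc * (yE p)^(bb-1) * (xE p)^(aa - p * aa)
      calc (zE p)^cc * (yE p)^bb * (xE p)^aa * (yE p)⁻¹
          = (zE p)^cc * (yE p)^bb * ((xE p)^aa * (yE p)⁻¹) := by group
      _ = (zE p)^cc * (yE p)^bb * ((yE p)⁻¹ * ((xE p)^aa * (((xE p)^p)^aa)⁻¹)) := by
            rw [XaYinv]
      _ = (zE p)^(cc) * (yE p)^(bb-1) * (xE p)^(aa - p * aa) := by group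
    · obtain ⟨m, hm⟩ := XaZi (p := p) aa
      refine ⟨cc - 1, bb - aa, aa + p * (m - aa * aa), ?_⟩
      have hYZ : (yE p)^bb * (zE p)⁻¹ = (zE p)⁻¹ * (yE p)^bb :=
        (((show Commute (yE p) (zE p) from relE8).zpow_left bb).inv_right).eq
      show (zE p)^cc * (yE p)^bb * (xE p)^aa * (zE p)⁻¹
        = (zE p)^(cc-1) * (yE p)^(bb-aa) * (xE p)^(aa + p * (m - aa * aa))
      calc (zE p)^cc * (yE p)^bb * (xE p)^aa * (zE p)⁻¹
          = (zE p)^cc * (yE p)^bb * ((xE p)^aa * (zE p)⁻¹) := by group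
      _ = (zE p)^cc * (yE p)^bb * ((zE p)⁻¹ * (xE p)^aa * (yE p)^(-aa) * ((xE p)^p)^m) := by
            rw [hm]
      _ = (zE p)^cc * ((yE p)^bb * (zE p)⁻¹) * ((xE p)^aa * (yE p)^(-aa)) * ((xE p)^p)^m := by
            group
      _ = (zE p)^cc * ((zE p)⁻¹ * (yE p)^bb) * ((xE p)^aa * (yE p)^(-aa)) * ((xE p)^p)^m := by
            rw [hYZ]
      _ = (zE p)^cc * ((zE p)⁻¹ * (yE p)^bb) * ((yE p)^(-aa) * ((xE p)^aa * ((xE p)^p)^(aa * -aa)))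
            * ((xE p)^p)^m := by rw [XaYb]
      _ = (zE p)^(cc-1) * (yE p)^(bb-aa) * (xE p)^(aa + p * (m - aa * aa)) := by
            group
    · refine ⟨cc + p, bb, aa - p, ?_⟩
      show (zE p)^cc * (yE p)^bb * (xE p)^aa * (nE p)⁻¹
        = (zE p)^(cc + p) * (yE p)^bb * (xE p)^(aa - p)
      calc (zE p)^cc * (yE p)^bb * (xE p)^aa * (nE p)⁻¹
          = (nE p)⁻¹ * ((zE p)^cc * (yE p)^bb * (xE p)^aa) :=
            ((N_central ((zE p)^cc * (yE p)^bb * (xE p)^aa)).inv_left.symm).eq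
      _ = ((xE p)^p)⁻¹ * (((zE p)^p * (zE p)^cc) * (yE p)^bb) * (xE p)^aa := by
            rw [NvalNat]; group
      _ = (((zE p)^p * (zE p)^cc) * (yE p)^bb) * ((xE p)^p)⁻¹ * (xE p)^aa := by
            rw [((Xp_central hodd (((zE p)^p * (zE p)^cc) * (yE p)^bb)).inv_left).eq]
      _ = (zE p)^(cc + p) * (yE p)^bb * (xE p)^(aa - p) := by group

end Facts

section Homo
open MM

variable (p : ℕ) [Fact p.Prime] [Fact (Odd p)]

instance instNZ : NeZero p := ⟨(Fact.out : p.Prime).ne_zero⟩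

def fgen : Fin 4 → MM p := ![MM.xM p, MM.yM p, MM.zM p, MM.nM p]

lemma hrelsM : ∀ r ∈ E2defs.rels p, FreeGroup.lift (fgen p) r = 1 := by
  have hp : p.Prime := Fact.out
  have hodd : Odd p := Fact.out
  intro r hr
  simp only [E2defs.rels, Set.mem_insert_iff, Set.mem_singleton_iff] at hr
  rcases hr with rfl|rfl|rfl|rfl|rfl|rfl|rfl|rfl|rfl|rfl|rfl <;>
    simp only [comm', map_mul, map_inv, map_pow, FreeGroup.lift_apply_of, fgen,
      Matrix.cons_val_zero, Matrix.cons_val_one, Matrix.head_cons,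
      Matrix.cons_val_two, Matrix.tail_cons, Matrix.cons_val_three]
  · exact xM_pow_psq
  · exact yM_pow_p
  · exact zM_pow_psq
  · exact nM_pow_p
  · rw [mul_inv_eq_one]; exact rel5M
  · exact rel_of_aux (rel6M hp hodd)
  · exact rel_of_aux rel7M
  · exact rel_of_comm rel8M
  · exact rel_of_comm rel9M
  · exact rel_of_comm rel10M
  · exact rel_of_comm rel11M

def φ : E2 p →* MM p := PresentedGroup.toGroup (hrelsM p)

lemma φ_x : φ p (xE p) = MM.xM p := by
  rw [xE, φ, PresentedGroup.toGroup.of]; rfl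

lemma φ_y : φ p (yE p) = MM.yM p := by
  rw [yE, φ, PresentedGroup.toGroup.of]; rfl

lemma φ_z : φ p (zE p) = MM.zM p := by
  rw [zE, φ, PresentedGroup.toGroup.of]; rfl

lemma prod_eq (u : MM p) :
    (MM.zM p)^(u.c.val) * (MM.xM p)^(u.a.val) * (MM.yM p)^(u.b.val) = u := by
  rw [MM.zM_pow, MM.xM_pow, MM.yM_pow]
  ext <;>
    simp [MM.bb_ff, MM.ff_zero, MM.val_cast, MM.val_cast', map_natCast]

lemma φ_surj : Function.Surjective (φ p) := by
  intro u
  refine ⟨(zE p)^(u.c.val) * (xE p)^(u.a.val) * (yE p)^(u.b.val), ?_⟩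
  rw [map_mul, map_mul, map_pow, map_pow, map_pow, φ_x, φ_y, φ_z, prod_eq]

lemma zpow_reduce {G : Type*} [Group G] (g : G) {n : ℕ} (hn : 0 < n) (h : g^n = 1) (t : ℤ) :
    ∃ s : ℕ, s < n ∧ g^t = g^s := by
  have hn' : (n:ℤ) ≠ 0 := by exact_mod_cast hn.ne'
  have h1 : t % n < n := Int.emod_lt_of_pos t (by exact_mod_cast hn)
  have h2 : 0 ≤ t % n := Int.emod_nonneg t hn'
  refine ⟨(t % n).toNat, by omega, ?_⟩
  have hsplit : g^t = (g^((n:ℤ)))^(t / n) * g^(t % n) := by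
    rw [← zpow_mul, ← zpow_add, Int.mul_ediv_add_emod t (n:ℤ)]
  have hgn : g^((n:ℤ)) = 1 := by rw [zpow_natCast, h]
  rw [hsplit, hgn, one_zpow, one_mul, ← zpow_natCast,
    Int.toNat_of_nonneg h2]

def F : Fin (p^2) × Fin p × Fin (p^2) → E2 p :=
  fun q => (zE p)^(q.1 : ℕ) * (yE p)^(q.2.1 : ℕ) * (xE p)^(q.2.2 : ℕ)

lemma F_surj : Function.Surjective (F p) := by
  have hodd : Odd p := Fact.out
  have hp2 : 0 < p^2 := pow_pos (Nat.pos_of_ne_zero (NeZero.ne p)) 2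
  have hp0 : 0 < p := Nat.pos_of_ne_zero (NeZero.ne p)
  intro g
  obtain ⟨cc, bb, aa, rfl⟩ := normal_form hodd g
  obtain ⟨sc, hsc, hzc⟩ := zpow_reduce (zE p) hp2 relE3 cc
  obtain ⟨sb, hsb, hzb⟩ := zpow_reduce (yE p) hp0 relE2 bb
  obtain ⟨sa, hsa, hza⟩ := zpow_reduce (xE p) hp2 relE1 aa
  exact ⟨(⟨sc, hsc⟩, ⟨sb, hsb⟩, ⟨sa, hsa⟩), by simp [F, ← hzc, ← hzb, ← hza]⟩

lemma finiteE2 : Finite (E2 p) := Finite.of_surjective (F p) (F_surj p)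

lemma cardE2_le : Nat.card (E2 p) ≤ p^5 := by
  have h := Nat.card_le_card_of_surjective (F p) (F_surj p)
  calc Nat.card (E2 p) ≤ Nat.card (Fin (p^2) × Fin p × Fin (p^2)) := h
  _ = p^5 := by simp [Nat.card_prod]; ring

lemma φ_bij : Function.Bijective (φ p) := by
  haveI := finiteE2 p
  refine (Nat.bijective_iff_surjective_and_card _).mpr ⟨φ_surj p, ?_⟩
  have h1 := cardE2_le p
  have h2 : Nat.card (MM p) ≤ Nat.card (E2 p) :=
    Nat.card_le_card_of_surjective _ (φ_surj p)
  rw [MM.card_MM] at h2 ⊢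
  omega


lemma closure_xy_eq : Subgroup.closure {xE p, yE p} = (K1 p).comap (φ p) := by
  apply le_antisymm
  · rw [Subgroup.closure_le]
    rintro g (rfl | rfl)
    · show φ p (xE p) ∈ K1 p
      rw [φ_x]; exact rfl
    · show φ p (yE p) ∈ K1 p
      rw [φ_y]; exact rfl
  · intro g hg
    have hc : (φ p g).c = 0 := hg
    have himg : φ p ((xE p)^((φ p g).a.val) * (yE p)^((φ p g).b.val)) = φ p g := by
      rw [map_mul, map_pow, map_pow, φ_x, φ_y, MM.xM_pow, MM.yM_pow]
      ext <;> simp [MM.bb_ff, MM.ff_zero, MM.val_cast, MM.val_cast', hc]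
    have hge : g = (xE p)^((φ p g).a.val) * (yE p)^((φ p g).b.val) :=
      (φ_bij p).injective (by rw [himg])
    rw [hge]
    exact mul_mem (pow_mem (Subgroup.subset_closure (by simp)) _)
      (pow_mem (Subgroup.subset_closure (by simp)) _)

lemma closure_yz_eq : Subgroup.closure {yE p, zE p} = (K2 p).comap (φ p) := by
  apply le_antisymm
  · rw [Subgroup.closure_le]
    rintro g (rfl | rfl)
    · show φ p (yE p) ∈ K2 p
      rw [φ_y]; exact rfl
    · show φ p (zE p) ∈ K2 p
      rw [φ_z]; exact rfl
  · intro g hg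
    have ha : (φ p g).a = 0 := hg
    have himg : φ p ((zE p)^((φ p g).c.val) * (yE p)^((φ p g).b.val)) = φ p g := by
      rw [map_mul, map_pow, map_pow, φ_z, φ_y, MM.zM_pow, MM.yM_pow]
      ext <;> simp [MM.bb_ff, MM.ff_zero, MM.val_cast, MM.val_cast', ha]
    have hge : g = (zE p)^((φ p g).c.val) * (yE p)^((φ p g).b.val) :=
      (φ_bij p).injective (by rw [himg])
    rw [hge]
    exact mul_mem (pow_mem (Subgroup.subset_closure (by simp)) _)
      (pow_mem (Subgroup.subset_closure (by simp)) _)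

lemma index_xy : (Subgroup.closure {xE p, yE p}).index = p^2 := by
  rw [closure_xy_eq, Subgroup.index_comap_of_surjective _ (φ_surj p),
    MM.index_K1 (Fact.out : p.Prime)]

lemma index_yz : (Subgroup.closure {yE p, zE p}).index = p^2 := by
  rw [closure_yz_eq, Subgroup.index_comap_of_surjective _ (φ_surj p),
    MM.index_K2 (Fact.out : p.Prime)]

lemma cores_inf :
    (Subgroup.closure {xE p, yE p}).normalCore ⊓ (Subgroup.closure {yE p, zE p}).normalCore
      = ⊥ := by
  apply le_antisymm _ bot_le
  intro g hg
  obtain ⟨hg1, hg2⟩ := Subgroup.mem_inf.mp hg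
  have m1 : g ∈ Subgroup.closure {xE p, yE p} := Subgroup.normalCore_le _ hg1
  have m2 : g ∈ Subgroup.closure {yE p, zE p} := Subgroup.normalCore_le _ hg2
  have m3 : xE p * g * (xE p)⁻¹ ∈ Subgroup.closure {yE p, zE p} :=
    Subgroup.normalCore_le _
      ((Subgroup.normalCore_normal _).conj_mem g hg2 (xE p))
  rw [closure_xy_eq] at m1
  rw [closure_yz_eq] at m2 m3
  have h1 : (φ p g).c = 0 := m1
  have h2 : (φ p g).a = 0 := m2
  have h3 : (MM.xM p * φ p g * (MM.xM p)⁻¹).a = 0 := by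
    have := m3
    simp only [Subgroup.mem_comap, map_mul, map_inv, φ_x] at this
    exact this
  have hone := MM.core_key (Fact.out : p.Prime) (Fact.out : Odd p) (φ p g) h1 h2 h3
  have : g = 1 := (φ_bij p).injective (by rw [hone, map_one])
  simp [this, Subgroup.mem_bot]

noncomputable def ψ : MM p →* Equiv.Perm ((MM p ⧸ K1 p) ⊕ (MM p ⧸ K2 p)) :=
  (Equiv.Perm.sumCongrHom _ _).comp
    ((MulAction.toPermHom (MM p) (MM p ⧸ K1 p)).prod (MulAction.toPermHom (MM p) (MM p ⧸ K2 p)))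

lemma ψ_inj : Function.Injective (ψ p) := by
  rw [← MonoidHom.ker_eq_bot_iff]
  refine le_antisymm ?_ bot_le
  intro u hu
  have hu1 : ψ p u = 1 := hu
  have hprod : ((MulAction.toPermHom (MM p) (MM p ⧸ K1 p)).prod
      (MulAction.toPermHom (MM p) (MM p ⧸ K2 p))) u = 1 := by
    apply Equiv.Perm.sumCongrHom_injective
    rw [← map_one (Equiv.Perm.sumCongrHom (MM p ⧸ K1 p) (MM p ⧸ K2 p))] at hu1
    exact hu1
  have h1 : MulAction.toPermHom (MM p) (MM p ⧸ K1 p) u = 1 := congrArg Prod.fst hprod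
  have h2 : MulAction.toPermHom (MM p) (MM p ⧸ K2 p) u = 1 := congrArg Prod.snd hprod
  have hk1 : u ∈ (K1 p).normalCore := by rw [Subgroup.normalCore_eq_ker]; exact h1
  have hk2 : u ∈ (K2 p).normalCore := by rw [Subgroup.normalCore_eq_ker]; exact h2
  have mc1 : u ∈ K1 p := Subgroup.normalCore_le _ hk1
  have mc2 : u ∈ K2 p := Subgroup.normalCore_le _ hk2
  have mc3 : MM.xM p * u * (MM.xM p)⁻¹ ∈ K2 p :=
    Subgroup.normalCore_le _
      ((Subgroup.normalCore_normal _).conj_mem u hk2 (MM.xM p))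
  have := MM.core_key (Fact.out : p.Prime) (Fact.out : Odd p) u mc1 mc2 mc3
  simp [this, Subgroup.mem_bot]

noncomputable def permEquivHom {α β : Type*} (e : α ≃ β) :
    Equiv.Perm α →* Equiv.Perm β where
  toFun σ := e.permCongr σ
  map_one' := by ext b; simp
  map_mul' σ τ := by ext b; simp [Equiv.permCongr_apply]

lemma permEquivHom_inj {α β : Type*} (e : α ≃ β) :
    Function.Injective (permEquivHom e) :=
  fun σ τ h => e.permCongr.injective h

lemma card_sum_quot :
    Nat.card ((MM p ⧸ K1 p) ⊕ (MM p ⧸ K2 p)) = 2 * p^2 := by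
  rw [Nat.card_sum, ← Subgroup.index_eq_card, ← Subgroup.index_eq_card,
    MM.index_K1 (Fact.out : p.Prime), MM.index_K2 (Fact.out : p.Prime)]
  ring

noncomputable def finalHom : E2 p →* Equiv.Perm (Fin (2 * p^2)) :=
  (permEquivHom (Finite.equivFinOfCardEq (card_sum_quot p))).comp ((ψ p).comp (φ p))

lemma finalHom_inj : Function.Injective (finalHom p) :=
  (permEquivHom_inj _).comp ((ψ_inj p).comp (φ_bij p).injective)

end Homo
end E2proof

/-- The subgroups `H₁ = ⟨x,y⟩` and `H₂ = ⟨y,z⟩` of `E₂` both have index `p²`, their cores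
intersect trivially, and hence `E₂` has a faithful permutation representation of degree `2p²`. -/
theorem E2_faithful_rep_two_p_sq (p : ℕ) (hp : p.Prime) (hodd : Odd p) :
    (Subgroup.closure {xE p, yE p}).index = p ^ 2 ∧
    (Subgroup.closure {yE p, zE p}).index = p ^ 2 ∧
    (Subgroup.closure {xE p, yE p}).normalCore ⊓
      (Subgroup.closure {yE p, zE p}).normalCore = ⊥ ∧
    ∃ f : E2 p →* Equiv.Perm (Fin (2 * p ^ 2)), Function.Injective f := by
  haveI : Fact p.Prime := ⟨hp⟩
  haveI : Fact (Odd p) := ⟨hodd⟩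
  exact ⟨E2proof.index_xy p, E2proof.index_yz p, E2proof.cores_inf p,
    E2proof.finalHom p, E2proof.finalHom_inj p⟩
end
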